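/- arXiv:1712.01167 — 5 statements merged into one kernel-verified Lean document; each statement's English description precedes it below -/
import Mathlib

section
/- Assume char k = 3, and let g be the linear map of k⁴ given by g(x₀,x₁,x₂,x₃) = (x₀ + x₁, x₁, x₂ + x₃, x₃) (the block matrix J₂(1) ⊕ J₂(1), which has order 3 in characteristic 3). If F is a nonzero homogeneous polynomial of degree 3 in k[x₀,x₁,x₂,x₃] with F∘g = λ·F for some λ ∈ kˣ, then the cubic surface V(F) is not smooth. (No smooth cubic surface in characteristic 3 is invariant under a projective automorphism of order 3 of this Jordan type.) -/
/-!
Since `g³ = 1` in characteristic 3, the eigenvalue `λ` satisfies `λ³ = 1`, hence `λ = 1`, and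
`F ∘ g = F`. Restrict to the line `L = {x₁ = x₃ = 0}` of fixed points of `g`. Differentiating
`F ∘ g = F` once shows that `∂₀F` and `∂₂F` vanish on `L`; differentiating twice shows that
`(∂₁F, ∂₃F)|_L` is a Killing vector field on `L` whose components are quadratic forms, hence zero.
So the whole gradient of `F` vanishes along `L`, and every point of `L ∩ V(F)` is singular. Such
a point exists: `F|_L` has vanishing partial derivatives, so in characteristic 3 it is
`a x₀³ + b x₂³`, which has a nontrivial zero over an algebraically closed field.
-/

open MvPolynomial Matrix

/-- The polynomial `F(A·x)`, obtained from `F` by substituting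
`xᵢ ↦ ∑ⱼ Aᵢⱼ xⱼ`. -/
noncomputable def substMatrix {k : Type*} [Field k] (A : Matrix (Fin 4) (Fin 4) k)
    (F : MvPolynomial (Fin 4) k) : MvPolynomial (Fin 4) k :=
  aeval (fun i => ∑ j, C (A i j) * X j) F

/-- A matrix `A` leaves the cubic surface `V(F)` invariant if `F(A·x) = λ·F(x)`
for some `λ ∈ kˣ`. -/
def LeavesInvariant {k : Type*} [Field k] (A : Matrix (Fin 4) (Fin 4) k)
    (F : MvPolynomial (Fin 4) k) : Prop :=
  ∃ lam : kˣ, substMatrix A F = (lam : k) • F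

namespace MvPolynomial

variable {R σ τ : Type*} [CommRing R]

theorem pderiv_pderiv_comm (i j : σ) (φ : MvPolynomial σ R) :
    pderiv i (pderiv j φ) = pderiv j (pderiv i φ) := by
  have h : ⁅pderiv i, pderiv j⁆ = (0 : Derivation R (MvPolynomial σ R) (MvPolynomial σ R)) :=
    derivation_ext fun l => by
      classical
      rw [Derivation.commutator_apply]
      simp [pderiv_X, Pi.single_apply, apply_ite]
  rw [← sub_eq_zero, ← Derivation.commutator_apply, h, Derivation.zero_apply]

theorem pderiv_aeval [Fintype σ] (s : σ → MvPolynomial τ R) (i : τ) (φ : MvPolynomial σ R) :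
    pderiv i (aeval s φ) = ∑ j, pderiv i (s j) * aeval s (pderiv j φ) := by
  classical
  induction φ using MvPolynomial.induction_on with
  | C a => simp
  | add p q hp hq => simp only [map_add, hp, hq, mul_add, Finset.sum_add_distrib]
  | mul_X p n ih =>
    simp only [map_mul, aeval_X, pderiv_mul, ih, map_add, mul_add, Finset.sum_add_distrib,
      Finset.sum_mul, pderiv_X]
    simp [Pi.single_apply, mul_comm, mul_assoc]

theorem IsHomogeneous.eq_zero_of_pderiv_eq_zero [Fintype σ] [IsDomain R] {φ : MvPolynomial σ R}
    {n : ℕ} (h : φ.IsHomogeneous n) (hn : (n : R) ≠ 0) (hd : ∀ i, pderiv i φ = 0) : φ = 0 := by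
  have euler := h.sum_X_mul_pderiv
  simp only [hd, mul_zero, Finset.sum_const_zero, ← Nat.cast_smul_eq_nsmul R] at euler
  exact (smul_eq_zero.mp euler.symm).resolve_left hn

/-- For a Killing field `v` (`∂ᵢvⱼ + ∂ⱼvᵢ = 0`), `∂ᵢ∂ⱼvₖ` is symmetric in `i, j` and
antisymmetric in `j, k`, hence zero; so a homogeneous quadratic Killing field vanishes. -/
theorem eq_zero_of_pderiv_add_pderiv_eq_zero [Fintype σ] [IsDomain R] (h2 : (2 : R) ≠ 0)
    {v : σ → MvPolynomial σ R} (hv : ∀ i, (v i).IsHomogeneous 2)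
    (hkilling : ∀ i j, pderiv i (v j) + pderiv j (v i) = 0) : v = 0 := by
  have hsecond : ∀ i j k, pderiv i (pderiv j (v k)) = 0 := by
    intro i j k
    have e₁ := congrArg (pderiv i) (hkilling j k)
    have e₂ := congrArg (pderiv k) (hkilling i j)
    have e₃ := congrArg (pderiv j) (hkilling k i)
    simp only [map_add, map_zero] at e₁ e₂ e₃
    rw [pderiv_pderiv_comm i k] at e₁
    rw [pderiv_pderiv_comm k j] at e₂
    rw [pderiv_pderiv_comm j i] at e₃
    have htwice : C 2 * pderiv i (pderiv j (v k)) = 0 := by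
      rw [map_ofNat]; linear_combination e₁ - e₂ + e₃
    exact (mul_eq_zero.mp htwice).resolve_left (C_eq_zero.not.mpr h2)
  funext k
  refine (hv k).eq_zero_of_pderiv_eq_zero h2 fun j => ?_
  exact ((hv k).pderiv (i := j)).eq_zero_of_pderiv_eq_zero (n := 1) (by simp)
    fun i => hsecond i j k

theorem dvd_of_coeff_ne_zero_of_pderiv_eq_zero [IsDomain R] (p : ℕ) [CharP R p]
    {φ : MvPolynomial σ R} (hd : ∀ i, pderiv i φ = 0) {m : σ →₀ ℕ} (hm : coeff m φ ≠ 0)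
    (i : σ) : p ∣ m i := by
  classical
  obtain h0 | hpos := Nat.eq_zero_or_pos (m i)
  · simp [h0]
  have hcoeff := coeff_pderiv (i := i) φ (m - Finsupp.single i 1)
  rw [hd, coeff_zero, tsub_add_cancel_of_le (Finsupp.single_le_iff.2 hpos)] at hcoeff
  have hmi : ((m - Finsupp.single i 1 : σ →₀ ℕ) i + 1 : R) = m i := by
    rw [Finsupp.tsub_apply, Finsupp.single_eq_same, Nat.cast_sub hpos]; ring
  rw [hmi] at hcoeff
  exact (CharP.cast_eq_zero_iff R p _).mp ((mul_eq_zero.mp hcoeff.symm).resolve_left hm)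

section CharThree

variable [IsDomain R] [CharP R 3]

theorem eq_C_mul_X_pow_three_add_C_mul_X_pow_three {φ : MvPolynomial (Fin 2) R}
    (hφ : φ.IsHomogeneous 3) (hd : ∀ i, pderiv i φ = 0) :
    φ = C (coeff (Finsupp.single 0 3) φ) * X 0 ^ 3 +
      C (coeff (Finsupp.single 1 3) φ) * X 1 ^ 3 := by
  have hne : (Finsupp.single 0 3 : Fin 2 →₀ ℕ) ≠ Finsupp.single 1 3 := by
    simp [Finsupp.single_left_inj]
  ext m
  simp only [coeff_add, coeff_C_mul, X_pow_eq_monomial, coeff_monomial]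
  by_cases h₀ : m = Finsupp.single 0 3
  · simp [h₀, hne.symm]
  by_cases h₁ : m = Finsupp.single 1 3
  · simp [h₁, hne]
  rw [if_neg (Ne.symm h₀), if_neg (Ne.symm h₁), mul_zero, mul_zero, add_zero]
  by_contra hm
  have hdeg : m 0 + m 1 = 3 := by
    simpa [Finsupp.weight_apply, Finsupp.sum_fintype, Fin.sum_univ_two] using hφ hm
  have hdvd₀ := dvd_of_coeff_ne_zero_of_pderiv_eq_zero 3 hd hm 0
  have hdvd₁ := dvd_of_coeff_ne_zero_of_pderiv_eq_zero 3 hd hm 1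
  have hm : (m 0 = 0 ∧ m 1 = 3) ∨ (m 0 = 3 ∧ m 1 = 0) := by omega
  rcases hm with ⟨hm₀, hm₁⟩ | ⟨hm₀, hm₁⟩
  · exact h₁ (Finsupp.ext fun i => by fin_cases i <;> simp [hm₀, hm₁])
  · exact h₀ (Finsupp.ext fun i => by fin_cases i <;> simp [hm₀, hm₁])

theorem exists_ne_zero_eval_eq_zero_of_pderiv_eq_zero {k : Type*} [Field k] [IsAlgClosed k]
    [CharP k 3] {φ : MvPolynomial (Fin 2) k} (hφ : φ.IsHomogeneous 3)
    (hd : ∀ i, pderiv i φ = 0) : ∃ x : Fin 2 → k, x ≠ 0 ∧ eval x φ = 0 := by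
  obtain ⟨a, b, rfl⟩ : ∃ a b : k, φ = C a * X 0 ^ 3 + C b * X 1 ^ 3 :=
    ⟨_, _, eq_C_mul_X_pow_three_add_C_mul_X_pow_three hφ hd⟩
  obtain ⟨s, hs⟩ := IsAlgClosed.exists_pow_nat_eq b (n := 3) (by norm_num)
  obtain ⟨t, ht⟩ := IsAlgClosed.exists_pow_nat_eq (-a) (n := 3) (by norm_num)
  by_cases hst : ![s, t] = 0
  · refine ⟨![1, 0], by simp, ?_⟩
    have ht0 : t = 0 := by simpa using congrFun hst 1
    have ha : a = 0 := by simpa [ht0] using ht.symm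
    simp [ha]
  · refine ⟨![s, t], hst, ?_⟩
    simp only [map_add, map_mul, eval_C, map_pow, eval_X, Matrix.cons_val_zero,
      Matrix.cons_val_one, hs, ht]
    ring

end CharThree

end MvPolynomial

section JordanBlocks

noncomputable def jordanSubst (R : Type*) [CommRing R] :
    MvPolynomial (Fin 4) R →ₐ[R] MvPolynomial (Fin 4) R :=
  aeval ![X 0 + X 1, X 1, X 2 + X 3, X 3]

noncomputable def restrictFixedLine (R : Type*) [CommRing R] :
    MvPolynomial (Fin 4) R →ₐ[R] MvPolynomial (Fin 2) R :=
  aeval ![X 0, 0, X 1, 0]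

def lineCoord : Fin 2 → Fin 4 := ![0, 2]

def transverseCoord : Fin 2 → Fin 4 := ![1, 3]

variable {R : Type*} [CommRing R]

theorem substMatrix_eq_jordanSubst {k : Type*} [Field k] (F : MvPolynomial (Fin 4) k) :
    substMatrix (!![1, 1, 0, 0; 0, 1, 0, 0; 0, 0, 1, 1; 0, 0, 0, 1] :
      Matrix (Fin 4) (Fin 4) k) F = jordanSubst k F := by
  unfold substMatrix jordanSubst
  congr 2
  funext i
  fin_cases i <;> simp [Fin.sum_univ_four]

theorem jordanSubst_jordanSubst_jordanSubst [CharP R 3] (F : MvPolynomial (Fin 4) R) :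
    jordanSubst R (jordanSubst R (jordanSubst R F)) = F := by
  have h3 : (3 : MvPolynomial (Fin 4) R) = 0 := CharP.cast_eq_zero _ 3
  suffices (jordanSubst R).comp ((jordanSubst R).comp (jordanSubst R)) = AlgHom.id R _ from
    congrArg (· F) this
  refine algHom_ext fun i => ?_
  fin_cases i <;>
    simp only [jordanSubst, Fin.isValue, Fin.zero_eta, Fin.mk_one, Fin.reduceFinMk,
      AlgHom.coe_comp, AlgHom.coe_id, Function.comp_apply, id_eq, aeval_eq_bind₁, bind₁_X_right,
      cons_val_zero, cons_val_one, cons_val, map_add]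
  · linear_combination X 1 * h3
  · linear_combination X 3 * h3

theorem restrictFixedLine_jordanSubst (F : MvPolynomial (Fin 4) R) :
    restrictFixedLine R (jordanSubst R F) = restrictFixedLine R F := by
  suffices (restrictFixedLine R).comp (jordanSubst R) = restrictFixedLine R from
    congrArg (· F) this
  refine algHom_ext fun i => ?_
  fin_cases i <;> simp [jordanSubst, restrictFixedLine]

theorem pderiv_lineCoord_jordanSubst (j : Fin 2) (F : MvPolynomial (Fin 4) R) :
    pderiv (lineCoord j) (jordanSubst R F) = jordanSubst R (pderiv (lineCoord j) F) := by
  rw [jordanSubst, pderiv_aeval, Fin.sum_univ_four]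
  fin_cases j <;> simp [lineCoord]

theorem pderiv_transverseCoord_jordanSubst (j : Fin 2) (F : MvPolynomial (Fin 4) R) :
    pderiv (transverseCoord j) (jordanSubst R F) =
      jordanSubst R (pderiv (lineCoord j) F + pderiv (transverseCoord j) F) := by
  rw [jordanSubst, pderiv_aeval, Fin.sum_univ_four]
  fin_cases j <;> simp [lineCoord, transverseCoord]

theorem pderiv_restrictFixedLine (j : Fin 2) (F : MvPolynomial (Fin 4) R) :
    pderiv j (restrictFixedLine R F) = restrictFixedLine R (pderiv (lineCoord j) F) := by
  rw [restrictFixedLine, pderiv_aeval, Fin.sum_univ_four]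
  fin_cases j <;> simp [lineCoord]

theorem eval_restrictFixedLine (x : Fin 2 → R) (F : MvPolynomial (Fin 4) R) :
    eval x (restrictFixedLine R F) = eval ![x 0, 0, x 1, 0] F := by
  rw [restrictFixedLine, aeval_eq_bind₁]
  refine (eval₂Hom_bind₁ _ _ _ _).trans (congrArg (eval · F) ?_)
  funext i
  fin_cases i <;> simp

theorem MvPolynomial.IsHomogeneous.restrictFixedLine {n : ℕ} {F : MvPolynomial (Fin 4) R}
    (hF : F.IsHomogeneous n) : (restrictFixedLine R F).IsHomogeneous n := by
  have h := hF.aeval (![X 0, 0, X 1, 0] : Fin 4 → MvPolynomial (Fin 2) R) (n := 1) fun i => by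
    fin_cases i <;> simp [isHomogeneous_X, isHomogeneous_zero]
  rwa [one_mul] at h

end JordanBlocks

section Invariant

variable {R : Type*} [CommRing R] {F : MvPolynomial (Fin 4) R}

theorem jordanSubst_pderiv_lineCoord (hF : jordanSubst R F = F) (j : Fin 2) :
    jordanSubst R (pderiv (lineCoord j) F) = pderiv (lineCoord j) F := by
  rw [← pderiv_lineCoord_jordanSubst, hF]

theorem jordanSubst_pderiv_transverseCoord (hF : jordanSubst R F = F) (j : Fin 2) :
    jordanSubst R (pderiv (transverseCoord j) F) =
      pderiv (transverseCoord j) F - pderiv (lineCoord j) F := by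
  have h := pderiv_transverseCoord_jordanSubst j F
  rw [hF, map_add, jordanSubst_pderiv_lineCoord hF] at h
  linear_combination -h

theorem restrictFixedLine_pderiv_lineCoord (hF : jordanSubst R F = F) (j : Fin 2) :
    restrictFixedLine R (pderiv (lineCoord j) F) = 0 := by
  have h := congrArg (restrictFixedLine R) (jordanSubst_pderiv_transverseCoord hF j)
  rw [restrictFixedLine_jordanSubst, map_sub] at h
  linear_combination h

theorem pderiv_restrictFixedLine_pderiv_transverseCoord_add (hF : jordanSubst R F = F)
    (i j : Fin 2) :
    pderiv i (restrictFixedLine R (pderiv (transverseCoord j) F)) +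
      pderiv j (restrictFixedLine R (pderiv (transverseCoord i) F)) = 0 := by
  have h := congrArg (fun P => restrictFixedLine R (pderiv (transverseCoord i) P))
    (jordanSubst_pderiv_transverseCoord hF j)
  simp only [pderiv_transverseCoord_jordanSubst, restrictFixedLine_jordanSubst, map_add,
    map_sub] at h
  rw [pderiv_restrictFixedLine, pderiv_restrictFixedLine,
    pderiv_pderiv_comm (lineCoord j) (transverseCoord i)]
  linear_combination h

theorem restrictFixedLine_pderiv_eq_zero [IsDomain R] (h2 : (2 : R) ≠ 0)
    (hhom : F.IsHomogeneous 3) (hF : jordanSubst R F = F) (l : Fin 4) :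
    restrictFixedLine R (pderiv l F) = 0 := by
  have htransverse : (fun j => restrictFixedLine R (pderiv (transverseCoord j) F)) = 0 :=
    eq_zero_of_pderiv_add_pderiv_eq_zero h2 (fun j => hhom.pderiv.restrictFixedLine)
      (pderiv_restrictFixedLine_pderiv_transverseCoord_add hF)
  fin_cases l
  · exact restrictFixedLine_pderiv_lineCoord hF 0
  · exact congrFun htransverse 0
  · exact restrictFixedLine_pderiv_lineCoord hF 1
  · exact congrFun htransverse 1

theorem eq_one_of_jordanSubst_eq_smul [IsDomain R] [CharP R 3] (hF0 : F ≠ 0) {c : R}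
    (h : jordanSubst R F = c • F) : c = 1 := by
  have hcube : (c ^ 3 - 1) • F = 0 := by
    have := jordanSubst_jordanSubst_jordanSubst F
    simp only [h, map_smul, smul_smul] at this
    rw [sub_smul, one_smul, sub_eq_zero, pow_three, ← mul_assoc, this]
  have hc : c ^ 3 = 1 ^ 3 := by
    rw [one_pow]; exact sub_eq_zero.mp ((smul_eq_zero.mp hcube).resolve_right hF0)
  exact frobenius_inj R 3 hc

end Invariant

/-- In characteristic 3, no smooth cubic surface is invariant
under the projective automorphism of order 3 given by the Jordan type
`J₂(1) ⊕ J₂(1)`, i.e. `g(x₀,x₁,x₂,x₃) = (x₀+x₁, x₁, x₂+x₃, x₃)`: any cubic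
form `F` with `F ∘ g = λ·F` defines a non-smooth surface. -/
theorem stmt7 {k : Type*} [Field k] [IsAlgClosed k] (hchar : ringChar k = 3)
    (F : MvPolynomial (Fin 4) k) (hF0 : F ≠ 0) (hhom : F.IsHomogeneous 3)
    (hinv : ∃ lam : kˣ,
      substMatrix (!![1, 1, 0, 0; 0, 1, 0, 0; 0, 0, 1, 1; 0, 0, 0, 1] :
        Matrix (Fin 4) (Fin 4) k) F = (lam : k) • F) :
    ¬ (∀ x : Fin 4 → k,
        eval x F = 0 → (∀ i, eval x (pderiv i F) = 0) → x = 0) := by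
  have : CharP k 3 := ringChar.of_eq hchar
  obtain ⟨lam, hlam⟩ := hinv
  rw [substMatrix_eq_jordanSubst] at hlam
  have hF : jordanSubst k F = F := by
    rwa [eq_one_of_jordanSubst_eq_smul hF0 hlam, one_smul] at hlam
  have hgrad := restrictFixedLine_pderiv_eq_zero (Ring.two_ne_zero (by rw [hchar]; decide))
    hhom hF
  obtain ⟨y, hy0, hy⟩ := exists_ne_zero_eval_eq_zero_of_pderiv_eq_zero hhom.restrictFixedLine
    fun j => by rw [pderiv_restrictFixedLine, hgrad]
  intro hsmooth
  have hsing := hsmooth ![y 0, 0, y 1, 0] (by rwa [← eval_restrictFixedLine])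
    fun l => by rw [← eval_restrictFixedLine, hgrad, map_zero]
  exact hy0 (funext fun j => by fin_cases j; exacts [congrFun hsing 0, congrFun hsing 2])
end

section
/- Assume char k = 2 (k algebraically closed). Let σ₁, σ₂, σ₃ denote the elementary symmetric polynomials of degrees 1, 2, 3 in x₀,x₁,x₂,x₃. Then there exist A ∈ GL₄(k) and c ∈ kˣ such that (x₀³ + x₁³ + x₂³ + x₃³)(A·x) = c·(σ₁σ₂ + σ₃)(x). In other words, in characteristic 2 the Fermat cubic surface and the Clebsch cubic surface V(σ₁σ₂ − σ₃) are projectively equivalent. -/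
/-!
Let `ω² + ω + 1 = 0`, `J` the all-ones matrix and `s = σ₁`. In characteristic 2 with an even
number `n` of variables, `J² = n J = 0`, so `1 + ω J` is an involution; the substitution
`xᵢ ↦ xᵢ + ω s` it induces sends `∑ xᵢ³` to `p₃ + ω s p₂ + ω² s² p₁ + n ω³ s³ = p₃ + (ω + ω²) s³`
`= p₃ + s³`, because `p₂ = s²`. Newton's identity `p₃ = s³ + s σ₂ + σ₃` (mod 2) turns this into
`σ₁σ₂ + σ₃`.
-/

open MvPolynomial Matrix

namespace MvPolynomial

open Finset
variable {σ R : Type*} [CommRing R] [Fintype σ]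

variable (σ R) in
theorem psum_two_eq_esymm : psum σ R 2 = esymm σ R 1 ^ 2 - 2 * esymm σ R 2 := by
  rw [psum_eq_mul_esymm_sub_sum σ R 2 two_pos,
    show {a ∈ antidiagonal 2 | a.1 ∈ Set.Ioo 0 2} = {(1, 1)} by decide, sum_singleton,
    psum_one, ← esymm_one]
  ring

variable (σ R) in
theorem psum_three_eq_esymm :
    psum σ R 3 = esymm σ R 1 ^ 3 - 3 * esymm σ R 1 * esymm σ R 2 + 3 * esymm σ R 3 := by
  rw [psum_eq_mul_esymm_sub_sum σ R 3 three_pos,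
    show {a ∈ antidiagonal 3 | a.1 ∈ Set.Ioo 0 3} = {(1, 2), (2, 1)} by decide,
    sum_pair (by decide), psum_two_eq_esymm, psum_one, ← esymm_one]
  ring

theorem aeval_psum_three_add_mul_esymm_one [CharP R 2] (hσ : Even (Fintype.card σ)) {ω : R}
    (hω : ω ^ 2 + ω + 1 = 0) :
    aeval (fun i => X i + C ω * esymm σ R 1) (psum σ R 3) =
      esymm σ R 1 * esymm σ R 2 + esymm σ R 3 := by
  set s := esymm σ R 1
  set c := C ω * s
  have hcard : (Fintype.card σ : MvPolynomial σ R) = 0 :=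
    (CharP.cast_eq_zero_iff _ 2 _).mpr (even_iff_two_dvd.mp hσ)
  have hexpand : aeval (fun i => X i + c) (psum σ R 3) =
      psum σ R 3 + 3 * c * psum σ R 2 + 3 * c ^ 2 * psum σ R 1
        + (Fintype.card σ : MvPolynomial σ R) * c ^ 3 := by
    simp only [psum, map_sum, map_pow, aeval_X, mul_sum, ← sum_add_distrib, ← card_univ,
      ← nsmul_eq_mul, ← sum_const]
    exact sum_congr rfl fun i _ => by ring
  rw [hexpand, psum_three_eq_esymm, psum_two_eq_esymm, psum_one, ← esymm_one, hcard]
  have h2 : (2 : MvPolynomial σ R) = 0 := CharTwo.two_eq_zero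
  have hCω : C ω ^ 2 + C ω + 1 = (0 : MvPolynomial σ R) := by
    simpa only [map_add, map_pow, map_one, map_zero] using congrArg (C (σ := σ)) hω
  linear_combination 3 * s ^ 3 * hCω
    + (esymm σ R 3 - s ^ 3 - 2 * s * esymm σ R 2 - 3 * C ω * s * esymm σ R 2) * h2

end MvPolynomial

theorem substMatrix_one_add_smul_of_one {k : Type*} [Field k] (ω : k)
    (F : MvPolynomial (Fin 4) k) :
    substMatrix (1 + ω • Matrix.of fun _ _ => 1) F =
      aeval (fun i => X i + C ω * esymm (Fin 4) k 1) F := by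
  simp [substMatrix, add_mul, Finset.sum_add_distrib, one_apply, esymm_one, Finset.mul_sum]

theorem Matrix.one_add_smul_of_one_mul_self {n R : Type*} [Fintype n] [DecidableEq n] [CommRing R]
    [CharP R 2] (hn : Even (Fintype.card n)) (ω : R) :
    (1 + ω • Matrix.of fun _ _ : n => (1 : R)) * (1 + ω • Matrix.of fun _ _ => 1) = 1 := by
  set J : Matrix n n R := Matrix.of fun _ _ => 1
  have hJ : J * J = 0 := by
    ext i j
    simpa [J, Matrix.mul_apply] using (CharP.cast_eq_zero_iff R 2 _).mpr (even_iff_two_dvd.mp hn)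
  simp only [add_mul, mul_add, mul_one, one_mul, smul_mul_smul_comm, hJ, smul_zero, add_zero]
  rw [add_assoc, ← two_smul R, CharTwo.two_eq_zero, zero_smul, add_zero]

theorem IsAlgClosed.exists_sq_add_self_add_one_eq_zero (k : Type*) [Field k] [IsAlgClosed k] :
    ∃ ω : k, ω ^ 2 + ω + 1 = 0 := by
  obtain ⟨ω, hω⟩ := IsAlgClosed.exists_root (Polynomial.X ^ 2 + Polynomial.X + 1 : Polynomial k)
    (by rw [show (Polynomial.X ^ 2 + Polynomial.X + 1 : Polynomial k).degree = 2 by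
      compute_degree!]; decide)
  exact ⟨ω, by simpa using hω⟩

/-- In characteristic 2, the Fermat cubic surface
`V(x₀³+x₁³+x₂³+x₃³)` and the Clebsch cubic surface `V(σ₁σ₂ − σ₃)`
(`= V(σ₁σ₂ + σ₃)` since `char k = 2`) are projectively equivalent. -/
theorem stmt10 {k : Type*} [Field k] [IsAlgClosed k] (hchar : ringChar k = 2) :
    ∃ (A : Matrix (Fin 4) (Fin 4) k) (c : kˣ), IsUnit A.det ∧
      substMatrix A (X 0 ^ 3 + X 1 ^ 3 + X 2 ^ 3 + X 3 ^ 3 :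
          MvPolynomial (Fin 4) k) =
        (c : k) • (esymm (Fin 4) k 1 * esymm (Fin 4) k 2 + esymm (Fin 4) k 3) := by
  have := ringChar.of_eq hchar
  have hcard : Even (Fintype.card (Fin 4)) := by decide
  obtain ⟨ω, hω⟩ := IsAlgClosed.exists_sq_add_self_add_one_eq_zero k
  refine ⟨1 + ω • Matrix.of fun _ _ => 1, 1,
    isUnit_det_of_right_inverse (one_add_smul_of_one_mul_self hcard ω), ?_⟩
  have hfermat : (X 0 ^ 3 + X 1 ^ 3 + X 2 ^ 3 + X 3 ^ 3 : MvPolynomial (Fin 4) k) =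
      psum (Fin 4) k 3 := by
    simp [psum, Fin.sum_univ_four]
  rw [hfermat, substMatrix_one_add_smul_of_one, Units.val_one, one_smul,
    aeval_psum_three_add_mul_esymm_one hcard hω]
end

section
/- Let k be an algebraically closed field of characteristic p ≥ 0, let d ≥ 3 and n ≥ 4 be integers with p not dividing d and p not dividing d − 1, and let F = x₁^d + ⋯ + x_n^d ∈ k[x₁,…,x_n]. If A ∈ GL_n(k) and λ ∈ kˣ satisfy F(A·x) = λ·F(x), then A = c·D·P for some c ∈ kˣ, some diagonal matrix D all of whose diagonal entries are d-th roots of unity, and some permutation matrix P. In particular, the stabilizer of the Fermat hypersurface V(F) in PGL_n(k) is generated by the classes of permutation matrices and of diagonal matrices with d-th root of unity entries, and has order d^{n−1}·n!. -/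
open MvPolynomial Matrix

/-!
Differentiating `F(A·x) = λ·F(x)` in `x_j` and then in `x_l`, for `j ≠ l`, kills the right-hand
side, while the left-hand side becomes `G(A·x)` with `G = d(d-1) ∑ᵢ Aᵢⱼ Aᵢₗ xᵢ^(d-2)`. Since `A`
is invertible, `G = 0`, so every product `Aᵢⱼ Aᵢₗ` vanishes: each row of `A` has a single nonzero
entry, and `A = D·P` is a monomial matrix. Comparing coefficients in `F(D·P·x) = λ·F(x)` gives
`Dᵢ^d = λ` for all `i`, so `A` is a `d`-th root of `λ` times a diagonal matrix of `d`-th roots of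
unity times `P`. In `PGLₙ` the first diagonal entry can be normalized to `1`, and the matrices
`diag(1, ζ₂, …, ζₙ)·P_σ` lie in pairwise distinct classes, which gives the order `d^(n-1)·n!`.
-/

/-- The polynomial `F(A·x)`, obtained from `F` by substituting
`xᵢ ↦ ∑ⱼ Aᵢⱼ xⱼ`. -/
noncomputable def substMatrixN {k : Type*} [Field k] {n : ℕ}
    (A : Matrix (Fin n) (Fin n) k) (F : MvPolynomial (Fin n) k) :
    MvPolynomial (Fin n) k :=
  aeval (fun i => ∑ j, C (A i j) * X j) F

/-- The subgroup of scalar matrices in `GLₙ(k)`; `PGLₙ(k)` is the quotient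
of `GLₙ(k)` by this subgroup. -/
def scalarSubgroupN (k : Type*) [Field k] (n : ℕ) : Subgroup (GL (Fin n) k) :=
  (Units.map (algebraMap k (Matrix (Fin n) (Fin n) k)).toMonoidHom).range

section MonomialMatrix

variable {R ι : Type*} [CommRing R] [Fintype ι] [DecidableEq ι]

theorem diagonal_mul_permMatrix_apply (D : ι → R) (σ : Equiv.Perm ι) (i j : ι) :
    (diagonal D * σ.permMatrix R) i j = if σ i = j then D i else 0 := by
  simp [diagonal_mul, Equiv.Perm.permMatrix, PEquiv.toMatrix_apply, eq_comm]

theorem smul_diagonal_mul_permMatrix (c : R) (D : ι → R) (σ : Equiv.Perm ι) :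
    c • (diagonal D * σ.permMatrix R) = diagonal (c • D) * σ.permMatrix R := by
  rw [diagonal_smul, smul_mul]

theorem isUnit_diagonal_mul_permMatrix {D : ι → R} (hD : ∀ i, IsUnit (D i))
    (σ : Equiv.Perm ι) : IsUnit (diagonal D * σ.permMatrix R) := by
  rw [isUnit_iff_isUnit_det, det_mul, det_diagonal, det_permutation]
  exact (IsUnit.prod_univ_iff.mpr hD).mul ((Equiv.Perm.sign σ).isUnit.map (Int.castRingHom R))

theorem eq_of_diagonal_mul_permMatrix_eq {D D' : ι → R} {σ τ : Equiv.Perm ι}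
    (hD : ∀ i, D i ≠ 0) (h : diagonal D * σ.permMatrix R = diagonal D' * τ.permMatrix R) :
    D = D' ∧ σ = τ := by
  have hentry (i : ι) := congrFun (congrFun h i) (σ i)
  simp only [diagonal_mul_permMatrix_apply] at hentry
  have hστ : σ = τ := Equiv.ext fun i => by
    by_contra hne
    exact hD i (by simpa [Ne.symm hne] using hentry i)
  subst hστ
  exact ⟨funext fun i => by simpa using hentry i, rfl⟩

theorem exists_eq_diagonal_mul_permMatrix [NoZeroDivisors R] {A : Matrix ι ι R}
    (hA : A.det ≠ 0) (hrow : ∀ i j l, j ≠ l → A i j * A i l = 0) :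
    ∃ (D : ι → R) (σ : Equiv.Perm ι), (∀ i, D i ≠ 0) ∧ A = diagonal D * σ.permMatrix R := by
  have hnz (i : ι) : ∃ j, A i j ≠ 0 := by
    by_contra! h
    exact hA (det_eq_zero_of_row_eq_zero i h)
  choose f hf using hnz
  have hzero (i j : ι) (hj : j ≠ f i) : A i j = 0 :=
    (mul_eq_zero.mp (hrow i j (f i) hj)).resolve_right (hf i)
  have hsurj : Function.Surjective f := fun j => by
    by_contra! hj
    exact hA (det_eq_zero_of_column_eq_zero j fun i => hzero i j (Ne.symm (hj i)))
  obtain ⟨σ, rfl⟩ : ∃ σ : Equiv.Perm ι, ⇑σ = f :=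
    ⟨Equiv.ofBijective f ⟨Finite.injective_iff_surjective.mpr hsurj, hsurj⟩, rfl⟩
  refine ⟨fun i => A i (σ i), σ, hf, ?_⟩
  ext i j
  rw [diagonal_mul_permMatrix_apply]
  by_cases hj : j = σ i
  · simp [hj]
  · simp [Ne.symm hj, hzero i j hj]

end MonomialMatrix

theorem coeff_single_sum_C_mul_X_pow {R σ : Type*} [CommSemiring R] [Fintype σ]
    [DecidableEq σ] (c : σ → R) {e : ℕ} (he : e ≠ 0) (i : σ) :
    coeff (Finsupp.single i e) (∑ t, C (c t) * X t ^ e) = c i := by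
  simp [coeff_sum, coeff_C_mul, coeff_X_pow, Finsupp.single_left_inj he]

theorem sum_C_mul_X_pow_inj {R σ : Type*} [CommSemiring R] [Fintype σ] {c c' : σ → R}
    {e : ℕ} (he : e ≠ 0) :
    ∑ t, C (c t) * X t ^ e = ∑ t, C (c' t) * X t ^ e ↔ c = c' := by
  classical
  refine ⟨fun h => funext fun i => ?_, fun h => h ▸ rfl⟩
  simpa only [coeff_single_sum_C_mul_X_pow _ he] using congrArg (coeff (Finsupp.single i e)) h

section Substitution

variable {k : Type*} [Field k] {n : ℕ}

noncomputable def rowForm (A : Matrix (Fin n) (Fin n) k) (i : Fin n) : MvPolynomial (Fin n) k :=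
  ∑ j, C (A i j) * X j

theorem substMatrixN_sum_C_mul_X_pow (A : Matrix (Fin n) (Fin n) k) (c : Fin n → k) (e : ℕ) :
    substMatrixN A (∑ i, C (c i) * X i ^ e) = ∑ i, C (c i) * rowForm A i ^ e := by
  simp [substMatrixN, rowForm]

theorem substMatrixN_substMatrixN (A B : Matrix (Fin n) (Fin n) k)
    (F : MvPolynomial (Fin n) k) :
    substMatrixN B (substMatrixN A F) = substMatrixN (A * B) F := by
  rw [substMatrixN, substMatrixN, ← AlgHom.comp_apply, comp_aeval, substMatrixN]
  congr 2
  funext i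
  simp only [map_sum, map_mul, aeval_C, aeval_X, algebraMap_eq, mul_apply, Finset.sum_mul,
    Finset.mul_sum, mul_assoc]
  exact Finset.sum_comm

theorem substMatrixN_one (F : MvPolynomial (Fin n) k) : substMatrixN 1 F = F := by
  rw [substMatrixN]
  conv_rhs => rw [← aeval_X_left_apply F]
  congr 2
  funext i
  simp [one_apply]

theorem substMatrixN_injective {A : Matrix (Fin n) (Fin n) k} (hA : IsUnit A.det) :
    Function.Injective (substMatrixN A) :=
  Function.LeftInverse.injective (g := substMatrixN A⁻¹) fun F => by
    rw [substMatrixN_substMatrixN, mul_nonsing_inv A hA, substMatrixN_one]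

theorem pderiv_rowForm (A : Matrix (Fin n) (Fin n) k) (i j : Fin n) :
    pderiv j (rowForm A i) = C (A i j) := by
  simp [rowForm, pderiv_X, Pi.single_apply]

theorem pderiv_pderiv_rowForm_pow (A : Matrix (Fin n) (Fin n) k) (d : ℕ) (i j l : Fin n) :
    pderiv l (pderiv j (rowForm A i ^ d)) =
      C ((d : k) * ((d - 1 : ℕ) : k) * (A i j * A i l)) * rowForm A i ^ (d - 2) := by
  simp only [pderiv_pow, Derivation.leibniz, pderiv_rowForm, pderiv_C,
    ← C_eq_coe_nat, map_mul, smul_eq_mul, Nat.sub_sub]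
  ring

theorem rowForm_diagonal_mul_permMatrix (D : Fin n → k) (σ : Equiv.Perm (Fin n)) (i : Fin n) :
    rowForm (diagonal D * σ.permMatrix k) i = C (D i) * X (σ i) := by
  simp [rowForm, apply_ite C, ite_mul]

end Substitution

noncomputable abbrev fermatPoly (R : Type*) [CommSemiring R] (n d : ℕ) : MvPolynomial (Fin n) R :=
  ∑ i, X i ^ d

section Fermat

variable {k : Type*} [Field k] {n d : ℕ}

theorem substMatrixN_fermatPoly (A : Matrix (Fin n) (Fin n) k) :
    substMatrixN A (fermatPoly k n d) = ∑ i, rowForm A i ^ d := by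
  simp [substMatrixN, rowForm]

theorem pderiv_pderiv_fermatPoly_of_ne {j l : Fin n} (hjl : j ≠ l) :
    pderiv l (pderiv j (fermatPoly k n d)) = 0 := by
  simp [pderiv_X, Pi.single_apply, hjl.symm]

theorem mul_eq_zero_of_substMatrixN_fermatPoly_eq_smul (hd : 3 ≤ d)
    (hdd : (d : k) * ((d - 1 : ℕ) : k) ≠ 0) {A : Matrix (Fin n) (Fin n) k} (hA : IsUnit A.det)
    {lam : k} (hE : substMatrixN A (fermatPoly k n d) = lam • fermatPoly k n d)
    (i : Fin n) {j l : Fin n} (hjl : j ≠ l) : A i j * A i l = 0 := by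
  have hsecond : pderiv l (pderiv j (substMatrixN A (fermatPoly k n d))) = 0 := by
    rw [hE, smul_eq_C_mul, pderiv_C_mul, pderiv_C_mul, pderiv_pderiv_fermatPoly_of_ne hjl,
      mul_zero]
  simp only [substMatrixN_fermatPoly, map_sum, pderiv_pderiv_rowForm_pow] at hsecond
  have hzero : ∑ t, C ((d : k) * ((d - 1 : ℕ) : k) * (A t j * A t l)) * X t ^ (d - 2) =
      ∑ t, C 0 * X t ^ (d - 2) := by
    apply substMatrixN_injective hA
    rw [substMatrixN_sum_C_mul_X_pow, substMatrixN_sum_C_mul_X_pow, hsecond]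
    simp
  rw [sum_C_mul_X_pow_inj (by omega)] at hzero
  exact (mul_eq_zero.mp (congrFun hzero i)).resolve_left hdd

theorem substMatrixN_diagonal_mul_permMatrix_fermatPoly_eq_smul_iff (hd : d ≠ 0)
    (D : Fin n → k) (σ : Equiv.Perm (Fin n)) (lam : k) :
    substMatrixN (diagonal D * σ.permMatrix k) (fermatPoly k n d) = lam • fermatPoly k n d ↔
      ∀ i, D i ^ d = lam := by
  have hsubst : substMatrixN (diagonal D * σ.permMatrix k) (fermatPoly k n d) =
      ∑ t, C (D (σ.symm t) ^ d) * X t ^ d := by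
    rw [substMatrixN_fermatPoly, ← Equiv.sum_comp σ (fun t => C (D (σ.symm t) ^ d) * X t ^ d)]
    simp [rowForm_diagonal_mul_permMatrix, mul_pow]
  have hrhs : lam • fermatPoly k n d = ∑ t, C lam * X t ^ d := by
    simp [smul_eq_C_mul, Finset.mul_sum]
  rw [hsubst, hrhs, sum_C_mul_X_pow_inj hd, _root_.funext_iff, σ.surjective.forall]
  simp

theorem exists_eq_smul_diagonal_mul_permMatrix_of_substMatrixN_fermatPoly [IsAlgClosed k]
    (hd : 3 ≤ d) (hdd : (d : k) * ((d - 1 : ℕ) : k) ≠ 0)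
    {A : Matrix (Fin n) (Fin n) k} (hA : IsUnit A.det) {lam : kˣ}
    (hE : substMatrixN A (fermatPoly k n d) = (lam : k) • fermatPoly k n d) :
    ∃ (c : kˣ) (D : Fin n → k) (σ : Equiv.Perm (Fin n)),
      (∀ i, D i ^ d = 1) ∧ A = (c : k) • (diagonal D * σ.permMatrix k) := by
  obtain ⟨D, σ, -, rfl⟩ := exists_eq_diagonal_mul_permMatrix hA.ne_zero
    fun i j l hjl => mul_eq_zero_of_substMatrixN_fermatPoly_eq_smul hd hdd hA hE i hjl
  have hDpow := (substMatrixN_diagonal_mul_permMatrix_fermatPoly_eq_smul_iff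
    (by omega) D σ lam).mp hE
  obtain ⟨c, hc⟩ := IsAlgClosed.exists_pow_nat_eq (lam : k) (by omega : 0 < d)
  have hc0 : c ≠ 0 := by
    rintro rfl
    exact lam.ne_zero (hc ▸ zero_pow (by omega))
  refine ⟨Units.mk0 c hc0, c⁻¹ • D, σ, fun i => ?_, ?_⟩
  · simp [mul_pow, hDpow i, ← hc, hc0]
  · rw [smul_diagonal_mul_permMatrix, smul_smul, Units.val_mk0, mul_inv_cancel₀ hc0, one_smul]

end Fermat

abbrev fermatStabilizer (k : Type*) [Field k] (n d : ℕ) : Set (GL (Fin n) k) :=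
  {A | ∃ lam : kˣ, substMatrixN (A : Matrix (Fin n) (Fin n) k) (fermatPoly k n d) =
    (lam : k) • fermatPoly k n d}

section ProjectiveStabilizer

variable {k : Type*} [Field k] {n : ℕ}

theorem mk_eq_mk_iff_exists_smul {a b : GL (Fin n) k} :
    (a : GL (Fin n) k ⧸ scalarSubgroupN k n) = b ↔
      ∃ r : kˣ, (b : Matrix (Fin n) (Fin n) k) = (r : k) • (a : Matrix (Fin n) (Fin n) k) := by
  rw [QuotientGroup.eq, scalarSubgroupN, MonoidHom.mem_range]
  refine exists_congr fun r => ?_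
  rw [eq_inv_mul_iff_mul_eq, Units.ext_iff, Units.val_mul, eq_comm]
  simp [Algebra.algebraMap_eq_smul_one]

variable {m d : ℕ}

noncomputable def normalizedRoots (e : Fin m → rootsOfUnity d k) : Fin (m + 1) → k :=
  fun i => (((Fin.cons 1 e : Fin (m + 1) → rootsOfUnity d k) i : kˣ) : k)

noncomputable def normalizedMonomial (e : Fin m → rootsOfUnity d k)
    (σ : Equiv.Perm (Fin (m + 1))) : GL (Fin (m + 1)) k :=
  (isUnit_diagonal_mul_permMatrix (D := normalizedRoots e) (fun _ => Units.isUnit _) σ).unit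

theorem coe_normalizedMonomial (e : Fin m → rootsOfUnity d k) (σ : Equiv.Perm (Fin (m + 1))) :
    (normalizedMonomial e σ : Matrix (Fin (m + 1)) (Fin (m + 1)) k) =
      diagonal (normalizedRoots e) * σ.permMatrix k :=
  rfl

theorem normalizedRoots_pow (e : Fin m → rootsOfUnity d k) (i : Fin (m + 1)) :
    normalizedRoots e i ^ d = 1 :=
  (mem_rootsOfUnity' d _).mp ((Fin.cons 1 e : Fin (m + 1) → rootsOfUnity d k) i).2

theorem normalizedRoots_injective :
    Function.Injective (normalizedRoots : (Fin m → rootsOfUnity d k) → Fin (m + 1) → k) :=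
  fun e e' h => funext fun j => Subtype.ext <| Units.ext <| by
    simpa [normalizedRoots] using congrFun h j.succ

theorem exists_eq_smul_normalizedRoots [NeZero d] {D : Fin (m + 1) → k}
    (hD : ∀ i, D i ^ d = 1) :
    ∃ (r : kˣ) (e : Fin m → rootsOfUnity d k), D = (r : k) • normalizedRoots e := by
  have hD0 : D 0 ≠ 0 := fun h => by simpa [h, NeZero.ne d] using hD 0
  refine ⟨Units.mk0 (D 0) hD0,
    fun j => rootsOfUnity.mkOfPowEq (D j.succ / D 0) (by rw [div_pow, hD, hD, div_one]), ?_⟩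
  funext i
  induction i using Fin.cases <;> simp [normalizedRoots, hD0, mul_div_cancel₀]

theorem injective_mk_normalizedMonomial :
    Function.Injective fun x : (Fin m → rootsOfUnity d k) × Equiv.Perm (Fin (m + 1)) =>
      (normalizedMonomial x.1 x.2 : GL (Fin (m + 1)) k ⧸ scalarSubgroupN k (m + 1)) := by
  rintro ⟨e, σ⟩ ⟨e', σ'⟩ h
  dsimp only at h ⊢
  obtain ⟨r, hr⟩ := mk_eq_mk_iff_exists_smul.mp h
  rw [coe_normalizedMonomial, coe_normalizedMonomial, smul_diagonal_mul_permMatrix] at hr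
  obtain ⟨hroots, rfl⟩ := eq_of_diagonal_mul_permMatrix_eq (fun i => by simp [normalizedRoots])
    hr.symm
  have hr1 : (r : k) = 1 := by simpa [normalizedRoots] using congrFun hroots 0
  rw [hr1, one_smul] at hroots
  rw [normalizedRoots_injective hroots]

theorem image_mk_fermatStabilizer_eq_range [IsAlgClosed k] (hd : 3 ≤ d)
    (hdd : (d : k) * ((d - 1 : ℕ) : k) ≠ 0) :
    ((↑) '' fermatStabilizer k (m + 1) d : Set (GL (Fin (m + 1)) k ⧸ scalarSubgroupN k (m + 1))) =
      Set.range fun x : (Fin m → rootsOfUnity d k) × Equiv.Perm (Fin (m + 1)) =>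
        (normalizedMonomial x.1 x.2 : GL (Fin (m + 1)) k ⧸ scalarSubgroupN k (m + 1)) := by
  have : NeZero d := ⟨by omega⟩
  apply Set.Subset.antisymm
  · rintro _ ⟨A, ⟨lam, hE⟩, rfl⟩
    obtain ⟨c, D, σ, hD, hA⟩ := exists_eq_smul_diagonal_mul_permMatrix_of_substMatrixN_fermatPoly
      hd hdd ((isUnit_iff_isUnit_det _).mp A.isUnit) hE
    obtain ⟨r, e, rfl⟩ := exists_eq_smul_normalizedRoots hD
    refine ⟨(e, σ), mk_eq_mk_iff_exists_smul.mpr ⟨c * r, ?_⟩⟩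
    rw [hA, coe_normalizedMonomial, ← smul_diagonal_mul_permMatrix, smul_smul, Units.val_mul]
  · rintro _ ⟨⟨e, σ⟩, rfl⟩
    refine ⟨normalizedMonomial e σ, ⟨1, ?_⟩, rfl⟩
    rw [coe_normalizedMonomial, Units.val_one,
      substMatrixN_diagonal_mul_permMatrix_fermatPoly_eq_smul_iff (NeZero.ne d)]
    exact normalizedRoots_pow e

end ProjectiveStabilizer

/-- Let `p = char k` and `d ≥ 3`, `n ≥ 4` with `p ∤ d` and
`p ∤ d − 1`, and let `F = x₁^d + ⋯ + xₙ^d`.  Every `A ∈ GLₙ(k)` with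
`F(A·x) = λ·F(x)` factors as `c·D·P` with `c` a scalar, `D` diagonal with
`d`-th root of unity entries, and `P` a permutation matrix; consequently the
stabilizer of the Fermat hypersurface `V(F)` in `PGLₙ(k)` is finite of order
`d^(n−1)·n!`. -/
theorem stmt12 {k : Type*} [Field k] [IsAlgClosed k]
    (p : ℕ) (hchar : ringChar k = p)
    (d n : ℕ) (hd : 3 ≤ d) (hn : 4 ≤ n) (hpd : ¬ p ∣ d) (hpd1 : ¬ p ∣ (d - 1)) :
    (∀ (A : Matrix (Fin n) (Fin n) k) (lam : kˣ), IsUnit A.det →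
      substMatrixN A (∑ i : Fin n, X i ^ d) =
        (lam : k) • (∑ i : Fin n, X i ^ d : MvPolynomial (Fin n) k) →
      ∃ (c : kˣ) (D : Fin n → k) (σ : Equiv.Perm (Fin n)),
        (∀ i, D i ^ d = 1) ∧
        A = (c : k) • (Matrix.diagonal D * σ.permMatrix k)) ∧
    ((QuotientGroup.mk :
        GL (Fin n) k → GL (Fin n) k ⧸ scalarSubgroupN k n) ''
        {A : GL (Fin n) k | ∃ lam : kˣ,
          substMatrixN (A : Matrix (Fin n) (Fin n) k) (∑ i : Fin n, X i ^ d) =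
            (lam : k) • (∑ i : Fin n, X i ^ d : MvPolynomial (Fin n) k)}).Finite ∧
    ((QuotientGroup.mk :
        GL (Fin n) k → GL (Fin n) k ⧸ scalarSubgroupN k n) ''
        {A : GL (Fin n) k | ∃ lam : kˣ,
          substMatrixN (A : Matrix (Fin n) (Fin n) k) (∑ i : Fin n, X i ^ d) =
            (lam : k) • (∑ i : Fin n, X i ^ d : MvPolynomial (Fin n) k)}).ncard
      = d ^ (n - 1) * Nat.factorial n := by
  have hdd : (d : k) * ((d - 1 : ℕ) : k) ≠ 0 :=
    mul_ne_zero (fun h => hpd (hchar ▸ (ringChar.spec k d).mp h))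
      (fun h => hpd1 (hchar ▸ (ringChar.spec k (d - 1)).mp h))
  have : NeZero d := ⟨by omega⟩
  obtain ⟨m, rfl⟩ : ∃ m, n = m + 1 := ⟨n - 1, by omega⟩
  refine ⟨fun A lam hA hE =>
    exists_eq_smul_diagonal_mul_permMatrix_of_substMatrixN_fermatPoly hd hdd hA hE, ?_⟩
  rw [image_mk_fermatStabilizer_eq_range hd hdd]
  refine ⟨Set.finite_range _, ?_⟩
  have : NeZero (d : k) := ⟨left_ne_zero_of_mul hdd⟩
  obtain ⟨ζ, hζ⟩ := HasEnoughRootsOfUnity.exists_primitiveRoot k d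
  rw [Set.ncard_range_of_injective injective_mk_normalizedMonomial, Nat.card_prod, Nat.card_fun,
    hζ.card_rootsOfUnity, Nat.card_perm]
  simp
end

section
/- Assume char k ∉ {2,3}. Let c₀,…,c₄ and c′₀,…,c′₄ be nonzero elements of k, and set V₀ = {v ∈ k⁵ : v₀ + ⋯ + v₄ = 0}. Assume both Sylvester surfaces are smooth, i.e., there is no nonzero v ∈ V₀ with Σᵢ cᵢvᵢ³ = 0 and c₀v₀² = c₁v₁² = c₂v₂² = c₃v₃² = c₄v₄² (and likewise for the c′ᵢ). Suppose S : V₀ → V₀ is an invertible k-linear map and λ ∈ kˣ satisfy Σᵢ c′ᵢ (S v)ᵢ³ = λ·Σᵢ cᵢ vᵢ³ for all v ∈ V₀. Then there exist a permutation σ of {0,…,4} and μ, ν ∈ kˣ such that c′_{σ(i)} = μ·cᵢ for all i and S is the restriction to V₀ of ν·P_σ, where P_σ ∈ GL₅(k) is the permutation matrix of σ. In particular, the parameters of a Sylvester normal form are determined by the surface up to permutation and common scaling, and every automorphism of such a surface acts by permuting the coordinates. -/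
/-- The linear functional `v ↦ v₀ + ⋯ + v₄` on `k⁵`. -/
noncomputable def sumFunctional (k : Type*) [Field k] : (Fin 5 → k) →ₗ[k] k :=
  ∑ i : Fin 5, LinearMap.proj i

/-- The hyperplane `V₀ = {v ∈ k⁵ : v₀ + ⋯ + v₄ = 0}`. -/
noncomputable abbrev V0 (k : Type*) [Field k] : Submodule k (Fin 5 → k) :=
  LinearMap.ker (sumFunctional k)

namespace Stmt15Aux

variable {k : Type*} [Field k]

lemma sumFunctional_apply (x : Fin 5 → k) : sumFunctional k x = ∑ i, x i := by
  simp [sumFunctional]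

def eps (k : Type*) [Field k] (i j : Fin 5) : Fin 5 → k :=
  fun m => (if m = i then (1:k) else 0) - (if m = j then 1 else 0)

lemma eps_self (i : Fin 5) : eps k i i = 0 := by
  funext m; simp [eps]

lemma eps_apply_ne {A B m : Fin 5} (h1 : m ≠ A) (h2 : m ≠ B) : eps k A B m = 0 := by
  simp [eps, h1, h2]

lemma eps_apply_left {A B : Fin 5} (h : A ≠ B) : eps k A B A = 1 := by
  simp [eps, h]

lemma eps_apply_right {A B : Fin 5} (h : A ≠ B) : eps k A B B = -1 := by
  simp [eps, Ne.symm h]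

lemma sum_eps (i j : Fin 5) : ∑ m, eps k i j m = 0 := by
  simp [eps, Finset.sum_sub_distrib]

def epsV (k : Type*) [Field k] (i j : Fin 5) : V0 k :=
  ⟨eps k i j, by simp [LinearMap.mem_ker, sumFunctional_apply, sum_eps]⟩

@[simp] lemma epsV_coe (i j : Fin 5) : ((epsV k i j : V0 k) : Fin 5 → k) = eps k i j := rfl

lemma epsV_self (i : Fin 5) : epsV k i i = 0 := by
  apply Subtype.ext; simp [eps_self]

lemma epsV_anti (i j : Fin 5) : epsV k j i = - epsV k i j := by
  apply Subtype.ext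
  funext m
  show eps k j i m = - eps k i j m
  simp [eps]

lemma sum_mul_eps (f : Fin 5 → k) (A B : Fin 5) :
    ∑ m, f m * eps k A B m = f A - f B := by
  simp [eps, mul_sub, Finset.sum_sub_distrib, mul_ite, mul_one, mul_zero,
    Finset.sum_ite_eq']

lemma rep_of_support (f : Fin 5 → k) (hsum : ∑ m, f m = 0) (A B : Fin 5) (hAB : A ≠ B)
    (h0 : ∀ m, m ≠ A → m ≠ B → f m = 0) : ∀ m, f m = f A * eps k A B m := by
  have hpair : f A + f B = 0 := by
    rw [← Finset.sum_pair hAB, ← hsum]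
    refine Finset.sum_subset (Finset.subset_univ _) ?_
    intro x _ hx
    simp only [Finset.mem_insert, Finset.mem_singleton] at hx
    push_neg at hx
    exact h0 x hx.1 hx.2
  intro m
  by_cases h1 : m = A
  · subst h1; rw [eps_apply_left hAB, mul_one]
  by_cases h2 : m = B
  · subst h2
    rw [eps_apply_right hAB]
    linear_combination hpair
  · rw [eps_apply_ne h1 h2, h0 m h1 h2, mul_zero]

-- decide helpers
lemma D1 : ∀ i j : Fin 5, i ≠ j → ∃ a b d : Fin 5,
    a ≠ b ∧ a ≠ d ∧ b ≠ d ∧ a ≠ i ∧ a ≠ j ∧ b ≠ i ∧ b ≠ j ∧ d ≠ i ∧ d ≠ j := by decide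

lemma D2 : ∀ p q r : Fin 5, p ≠ q → p ≠ r → q ≠ r → ∃ m n : Fin 5,
    m ≠ n ∧ m ≠ p ∧ m ≠ q ∧ m ≠ r ∧ n ≠ p ∧ n ≠ q ∧ n ≠ r ∧
    (∀ l : Fin 5, l = p ∨ l = q ∨ l = r ∨ l = m ∨ l = n) := by decide

lemma D3 : ∀ a b d e : Fin 5, ∃ l : Fin 5, l ≠ a ∧ l ≠ b ∧ l ≠ d ∧ l ≠ e := by decide

lemma D4 : ∀ i : Fin 5, ∃ j l : Fin 5, j ≠ l ∧ j ≠ i ∧ l ≠ i := by decide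

end Stmt15Aux

open Stmt15Aux

/-- **uniqueness of the Sylvester normal form.**  For smooth
Sylvester surfaces `Σ cᵢ xᵢ³ = Σ xᵢ = 0` and `Σ c′ᵢ xᵢ³ = Σ xᵢ = 0` in
characteristic `≠ 2, 3`, any invertible linear `S : V₀ → V₀` with
`Σ c′ᵢ (Sv)ᵢ³ = λ · Σ cᵢ vᵢ³` is the restriction of `ν·P_σ` for a
permutation `σ` and scalar `ν`, with `c′_{σ(i)} = μ·cᵢ`. -/
theorem stmt15 {k : Type*} [Field k] [IsAlgClosed k]
    (h2 : ringChar k ≠ 2) (h3 : ringChar k ≠ 3)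
    (c c' : Fin 5 → k) (hc : ∀ i, c i ≠ 0) (hc' : ∀ i, c' i ≠ 0)
    (hsm : ¬ ∃ v : Fin 5 → k, v ≠ 0 ∧ (∑ i, v i) = 0 ∧
      (∑ i, c i * v i ^ 3) = 0 ∧ ∀ i j, c i * v i ^ 2 = c j * v j ^ 2)
    (hsm' : ¬ ∃ v : Fin 5 → k, v ≠ 0 ∧ (∑ i, v i) = 0 ∧
      (∑ i, c' i * v i ^ 3) = 0 ∧ ∀ i j, c' i * v i ^ 2 = c' j * v j ^ 2)
    (S : V0 k →ₗ[k] V0 k) (hS : Function.Bijective S) (lam : kˣ)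
    (hinv : ∀ v : V0 k,
      (∑ i, c' i * ((S v : Fin 5 → k) i) ^ 3) =
        (lam : k) * ∑ i, c i * ((v : Fin 5 → k) i) ^ 3) :
    ∃ (σ : Equiv.Perm (Fin 5)) (μ ν : kˣ),
      (∀ i, c' (σ i) = (μ : k) * c i) ∧
      ∀ v : V0 k, ∀ i, (S v : Fin 5 → k) (σ i) = (ν : k) * (v : Fin 5 → k) i := by
  classical
  have hSinj : Function.Injective S := hS.1
  have hSsurj : Function.Surjective S := hS.2
  have hsumv : ∀ v : V0 k, ∑ i, (v : Fin 5 → k) i = 0 := by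
    intro v
    have := v.2
    rwa [LinearMap.mem_ker, sumFunctional_apply] at this
  have h2' : (2:k) ≠ 0 := by
    intro h
    have := (CharP.cast_eq_zero_iff k (ringChar k) 2).mp (by exact_mod_cast h)
    rcases (Nat.dvd_prime Nat.prime_two).mp this with h1 | h1
    · exact CharP.ringChar_ne_one (R := k) h1
    · exact h2 h1
  have h3' : (3:k) ≠ 0 := by
    intro h
    have := (CharP.cast_eq_zero_iff k (ringChar k) 3).mp (by exact_mod_cast h)
    rcases (Nat.dvd_prime Nat.prime_three).mp this with h1 | h1
    · exact CharP.ringChar_ne_one (R := k) h1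
    · exact h3 h1
  have h6 : (6:k) ≠ 0 := by
    have : (6:k) = 2 * 3 := by norm_num
    rw [this]; exact mul_ne_zero h2' h3'
  -- trilinear version of the invariance
  have htri : ∀ u v w : V0 k,
      ∑ i, c' i * ((S u : Fin 5 → k) i * (((S v : Fin 5 → k) i) * ((S w : Fin 5 → k) i)))
        = (lam : k) * ∑ i, c i * ((u : Fin 5 → k) i * (((v : Fin 5 → k) i) * ((w : Fin 5 → k) i))) := by
    intro u v w
    have e1 := hinv (u+v+w)
    have e2 := hinv (u+v)
    have e3 := hinv (u+w)
    have e4 := hinv (v+w)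
    have e5 := hinv u
    have e6 := hinv v
    have e7 := hinv w
    simp only [map_add, Submodule.coe_add, Pi.add_apply] at e1 e2 e3 e4
    refine mul_left_cancel₀ h6 ?_
    simp only [Fin.sum_univ_five] at e1 e2 e3 e4 e5 e6 e7 ⊢
    linear_combination e1 - e2 - e3 - e4 + e5 + e6 + e7
  -- weighted products of two transformed eps vectors take constant "z-values"
  have hzconst : ∀ i j e f : Fin 5, e ≠ i → e ≠ j → f ≠ i → f ≠ j → ∀ m n : Fin 5,
      c' m * ((S (epsV k i j) : Fin 5 → k) m * (S (epsV k e f) : Fin 5 → k) m)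
        = c' n * ((S (epsV k i j) : Fin 5 → k) n * (S (epsV k e f) : Fin 5 → k) n) := by
    intro i j e f he1 he2 hf1 hf2 m n
    have hzero : ∀ u : V0 k,
        ∑ l, (c' l * ((S (epsV k i j) : Fin 5 → k) l * (S (epsV k e f) : Fin 5 → k) l))
          * (u : Fin 5 → k) l = 0 := by
      intro u
      obtain ⟨w, rfl⟩ := hSsurj u
      have h := htri (epsV k i j) (epsV k e f) w
      have hz : ∑ l, c l * ((epsV k i j : Fin 5 → k) l *
          (((epsV k e f : Fin 5 → k) l) * ((w : Fin 5 → k) l))) = 0 := by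
        apply Finset.sum_eq_zero
        intro l _
        rcases eq_or_ne l i with rfl | hli
        · rw [epsV_coe, epsV_coe, eps_apply_ne (Ne.symm he1) (Ne.symm hf1)]; ring
        rcases eq_or_ne l j with rfl | hlj
        · rw [epsV_coe, epsV_coe, eps_apply_ne (Ne.symm he2) (Ne.symm hf2)]; ring
        · rw [epsV_coe, eps_apply_ne hli hlj]; ring
      rw [hz, mul_zero] at h
      rw [← h]
      exact Finset.sum_congr rfl (fun l _ => by ring)
    rcases eq_or_ne m n with rfl | hmn
    · rfl
    have h := hzero (epsV k m n)
    rw [epsV_coe, sum_mul_eps] at h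
    exact sub_eq_zero.mp h
  -- no transformed eps vector has three nonzero coordinates
  have key2 : ∀ i j a b d : Fin 5, i ≠ j → a ≠ b → a ≠ d → b ≠ d →
      a ≠ i → a ≠ j → b ≠ i → b ≠ j → d ≠ i → d ≠ j →
      ∀ p q r : Fin 5, p ≠ q → p ≠ r → q ≠ r →
      (S (epsV k i j) : Fin 5 → k) p ≠ 0 → (S (epsV k i j) : Fin 5 → k) q ≠ 0 →
      (S (epsV k i j) : Fin 5 → k) r ≠ 0 → False := by
    intro i j a b d hij hab had hbd hai haj hbi hbj hdi hdj p q r hpq hpr hqr hyp hyq hyr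
    obtain ⟨m, n, hmn, hmp, hmq, hmr, hnp, hnq, hnr, hcover⟩ := D2 p q r hpq hpr hqr
    obtain ⟨y, hyY⟩ : ∃ y : V0 k, S (epsV k i j) = y := ⟨_, rfl⟩
    obtain ⟨w1, hw1Y⟩ : ∃ w1 : V0 k, S (epsV k a b) = w1 := ⟨_, rfl⟩
    obtain ⟨w2, hw2Y⟩ : ∃ w2 : V0 k, S (epsV k a d) = w2 := ⟨_, rfl⟩
    rw [hyY] at hyp hyq hyr
    have Hz1 := hzconst i j a b hai haj hbi hbj
    have Hz2 := hzconst i j a d hai haj hdi hdj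
    rw [hyY, hw1Y] at Hz1
    rw [hyY, hw2Y] at Hz2
    -- a final contradiction once w1 vanishes
    have habs : ((w1 : Fin 5 → k)) = 0 → False := by
      intro h0
      have hw10 : w1 = 0 := by
        apply Subtype.ext; rw [h0]; rfl
      have h1 : epsV k a b = 0 := hSinj (by rw [hw1Y, hw10, map_zero])
      have h2 : eps k a b a = 0 := congrFun (congrArg Subtype.val h1) a
      rw [eps_apply_left hab] at h2
      exact one_ne_zero h2
    by_cases hym : (y : Fin 5 → k) m = 0 ∨ (y : Fin 5 → k) n = 0
    · -- some coordinate of y vanishes; then both w1, w2 are supported on {m, n}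
      obtain ⟨o, ho⟩ : ∃ o, (y : Fin 5 → k) o = 0 := by
        rcases hym with h | h
        exacts [⟨m, h⟩, ⟨n, h⟩]
      have hz1zero : ∀ l, (y : Fin 5 → k) l ≠ 0 → (w1 : Fin 5 → k) l = 0 := by
        intro l hl
        have h := Hz1 l o
        rw [ho] at h
        have h0 : c' l * ((y : Fin 5 → k) l * (w1 : Fin 5 → k) l) = 0 := by
          rw [h]; ring
        exact (mul_eq_zero.mp ((mul_eq_zero.mp h0).resolve_left (hc' l))).resolve_left hl
      have hz2zero : ∀ l, (y : Fin 5 → k) l ≠ 0 → (w2 : Fin 5 → k) l = 0 := by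
        intro l hl
        have h := Hz2 l o
        rw [ho] at h
        have h0 : c' l * ((y : Fin 5 → k) l * (w2 : Fin 5 → k) l) = 0 := by
          rw [h]; ring
        exact (mul_eq_zero.mp ((mul_eq_zero.mp h0).resolve_left (hc' l))).resolve_left hl
      have hw1supp : ∀ l, l ≠ m → l ≠ n → (w1 : Fin 5 → k) l = 0 := by
        intro l h1 h1'
        rcases hcover l with rfl | rfl | rfl | rfl | rfl
        · exact hz1zero l hyp
        · exact hz1zero l hyq
        · exact hz1zero l hyr
        · exact absurd rfl h1
        · exact absurd rfl h1'
      have hw2supp : ∀ l, l ≠ m → l ≠ n → (w2 : Fin 5 → k) l = 0 := by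
        intro l h1 h1'
        rcases hcover l with rfl | rfl | rfl | rfl | rfl
        · exact hz2zero l hyp
        · exact hz2zero l hyq
        · exact hz2zero l hyr
        · exact absurd rfl h1
        · exact absurd rfl h1'
      have hw1rep := rep_of_support ((w1 : Fin 5 → k)) (hsumv w1) m n hmn hw1supp
      have hw2rep := rep_of_support ((w2 : Fin 5 → k)) (hsumv w2) m n hmn hw2supp
      have hx : ((w2 : Fin 5 → k) m) • epsV k a b - ((w1 : Fin 5 → k) m) • epsV k a d = 0 := by
        apply hSinj
        rw [map_sub, map_smul, map_smul, hw1Y, hw2Y, map_zero]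
        apply Subtype.ext
        funext l
        show (w2 : Fin 5 → k) m * (w1 : Fin 5 → k) l
            - (w1 : Fin 5 → k) m * (w2 : Fin 5 → k) l = 0
        rw [hw1rep l, hw2rep l]; ring
      have hxb : (w2 : Fin 5 → k) m * eps k a b b
          - (w1 : Fin 5 → k) m * eps k a d b = 0 := congrFun (congrArg Subtype.val hx) b
      have hxd : (w2 : Fin 5 → k) m * eps k a b d
          - (w1 : Fin 5 → k) m * eps k a d d = 0 := congrFun (congrArg Subtype.val hx) d
      rw [eps_apply_right hab, eps_apply_ne (Ne.symm hab) hbd] at hxb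
      rw [eps_apply_right had, eps_apply_ne (Ne.symm had) (Ne.symm hbd)] at hxd
      have hw1m : (w1 : Fin 5 → k) m = 0 := by linear_combination hxd
      apply habs
      funext l
      rw [hw1rep l, hw1m, zero_mul]
      rfl
    · -- all coordinates of y are nonzero
      push_neg at hym
      have hall : ∀ l, (y : Fin 5 → k) l ≠ 0 := by
        intro l
        rcases hcover l with rfl | rfl | rfl | rfl | rfl
        exacts [hyp, hyq, hyr, hym.1, hym.2]
      obtain ⟨s1, hs1⟩ : ∃ s1, c' p * ((y : Fin 5 → k) p * (w1 : Fin 5 → k) p) = s1 := ⟨_, rfl⟩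
      obtain ⟨s2, hs2⟩ : ∃ s2, c' p * ((y : Fin 5 → k) p * (w2 : Fin 5 → k) p) = s2 := ⟨_, rfl⟩
      have Hz1' : ∀ l, c' l * ((y : Fin 5 → k) l * (w1 : Fin 5 → k) l) = s1 := by
        intro l; rw [Hz1 l p, hs1]
      have Hz2' : ∀ l, c' l * ((y : Fin 5 → k) l * (w2 : Fin 5 → k) l) = s2 := by
        intro l; rw [Hz2 l p, hs2]
      have hx : s2 • epsV k a b - s1 • epsV k a d = 0 := by
        apply hSinj
        rw [map_sub, map_smul, map_smul, hw1Y, hw2Y, map_zero]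
        apply Subtype.ext
        funext l
        show s2 * (w1 : Fin 5 → k) l - s1 * (w2 : Fin 5 → k) l = 0
        have h0 : c' l * ((y : Fin 5 → k) l
            * (s2 * (w1 : Fin 5 → k) l - s1 * (w2 : Fin 5 → k) l)) = 0 := by
          linear_combination s2 * Hz1' l - s1 * Hz2' l
        exact (mul_eq_zero.mp ((mul_eq_zero.mp h0).resolve_left (hc' l))).resolve_left (hall l)
      have hxb : s2 * eps k a b b - s1 * eps k a d b = 0 := congrFun (congrArg Subtype.val hx) b
      rw [eps_apply_right hab, eps_apply_ne (Ne.symm hab) hbd] at hxb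
      have hs20 : s2 = 0 := by linear_combination -hxb
      have hxd : s2 * eps k a b d - s1 * eps k a d d = 0 := congrFun (congrArg Subtype.val hx) d
      rw [eps_apply_right had, eps_apply_ne (Ne.symm had) (Ne.symm hbd)] at hxd
      have hs10 : s1 = 0 := by linear_combination hxd
      apply habs
      funext l
      have h0 : c' l * ((y : Fin 5 → k) l * (w1 : Fin 5 → k) l) = 0 := by
        rw [Hz1' l, hs10]
      have := (mul_eq_zero.mp ((mul_eq_zero.mp h0).resolve_left (hc' l))).resolve_left (hall l)
      exact this
  -- epsV vectors are nonzero
  have hepsV_ne : ∀ i j : Fin 5, i ≠ j → epsV k i j ≠ 0 := by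
    intro i j hij h
    have h2 : eps k i j i = 0 := congrFun (congrArg Subtype.val h) i
    rw [eps_apply_left hij] at h2
    exact one_ne_zero h2
  -- extraction of the two-element support
  have hpair : ∀ i j : Fin 5, ∃ P Q : Fin 5, i ≠ j → (P ≠ Q ∧
      (S (epsV k i j) : Fin 5 → k) P ≠ 0 ∧
      ∀ m, (S (epsV k i j) : Fin 5 → k) m
        = (S (epsV k i j) : Fin 5 → k) P * eps k P Q m) := by
    intro i j
    by_cases hij : i = j
    · exact ⟨0, 1, fun h => absurd hij h⟩
    have hy0 : ∃ P, (S (epsV k i j) : Fin 5 → k) P ≠ 0 := by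
      by_contra hno
      push_neg at hno
      apply hepsV_ne i j hij
      apply hSinj
      rw [map_zero]
      exact Subtype.ext (funext fun m => hno m)
    obtain ⟨P, hP⟩ := hy0
    have hQex : ∃ Q, Q ≠ P ∧ (S (epsV k i j) : Fin 5 → k) Q ≠ 0 := by
      by_contra hno
      push_neg at hno
      have hsum := hsumv (S (epsV k i j))
      rw [Finset.sum_eq_single P (fun x _ hx => hno x hx)
        (fun h => absurd (Finset.mem_univ P) h)] at hsum
      exact hP hsum
    obtain ⟨Q, hQP, hQ⟩ := hQex
    have hsupp : ∀ m, m ≠ P → m ≠ Q → (S (epsV k i j) : Fin 5 → k) m = 0 := by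
      intro m h1 h2
      by_contra h3
      obtain ⟨a, b, d, hab, had, hbd, hai, haj, hbi, hbj, hdi, hdj⟩ := D1 i j hij
      exact key2 i j a b d hij hab had hbd hai haj hbi hbj hdi hdj P Q m
        (Ne.symm hQP) (Ne.symm h1) (Ne.symm h2) hP hQ h3
    exact ⟨P, Q, fun _ => ⟨Ne.symm hQP, hP,
      rep_of_support _ (hsumv _) P Q (Ne.symm hQP) hsupp⟩⟩
  choose P Q hPQ using hpair
  have hPQne : ∀ i j, i ≠ j → P i j ≠ Q i j := fun i j h => (hPQ i j h).1
  have hMP : ∀ i j, (h : i ≠ j) → (S (epsV k i j) : Fin 5 → k) (P i j) ≠ 0 :=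
    fun i j h => (hPQ i j h).2.1
  have hMrep : ∀ i j, (h : i ≠ j) → ∀ m, (S (epsV k i j) : Fin 5 → k) m
      = (S (epsV k i j) : Fin 5 → k) (P i j) * eps k (P i j) (Q i j) m :=
    fun i j h => (hPQ i j h).2.2
  have hMchar : ∀ i j, i ≠ j → ∀ m,
      ((S (epsV k i j) : Fin 5 → k) m ≠ 0 ↔ (m = P i j ∨ m = Q i j)) := by
    intro i j hij m
    constructor
    · intro h
      by_contra hn
      push_neg at hn
      rw [hMrep i j hij m, eps_apply_ne hn.1 hn.2, mul_zero] at h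
      exact h rfl
    · rintro (rfl | rfl)
      · exact hMP i j hij
      · rw [hMrep i j hij (Q i j), eps_apply_right (hPQne i j hij)]
        intro h
        exact hMP i j hij (by linear_combination -h)
  have hanti : ∀ i j : Fin 5, ∀ m,
      (S (epsV k j i) : Fin 5 → k) m = -(S (epsV k i j) : Fin 5 → k) m := by
    intro i j m
    rw [epsV_anti, map_neg]
    rfl
  have hsupp2' : ∀ i j, i ≠ j → ∀ A B, A ≠ B →
      (S (epsV k i j) : Fin 5 → k) A ≠ 0 → (S (epsV k i j) : Fin 5 → k) B ≠ 0 →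
      ∀ m, m ≠ A → m ≠ B → (S (epsV k i j) : Fin 5 → k) m = 0 := by
    intro i j hij A B hAB hA hB m h1 h2
    rcases (hMchar i j hij A).mp hA with rfl | rfl <;>
      rcases (hMchar i j hij B).mp hB with rfl | rfl
    · exact absurd rfl hAB
    · by_contra h3
      rcases (hMchar i j hij m).mp h3 with rfl | rfl
      · exact h1 rfl
      · exact h2 rfl
    · by_contra h3
      rcases (hMchar i j hij m).mp h3 with rfl | rfl
      · exact h2 rfl
      · exact h1 rfl
    · exact absurd rfl hAB
  -- two transformed eps vectors with the same 2-point support come from the same pair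
  have hProp : ∀ i j i' j' A B : Fin 5, i ≠ j → i' ≠ j' → A ≠ B →
      (∀ m, m ≠ A → m ≠ B → (S (epsV k i j) : Fin 5 → k) m = 0) →
      (∀ m, m ≠ A → m ≠ B → (S (epsV k i' j') : Fin 5 → k) m = 0) →
      (i = i' ∧ j = j') ∨ (i = j' ∧ j = i') := by
    intro i j i' j' A B hij hij' hAB hs1 hs2
    have hr1 := rep_of_support _ (hsumv (S (epsV k i j))) A B hAB hs1
    have hr2 := rep_of_support _ (hsumv (S (epsV k i' j'))) A B hAB hs2
    have hα : (S (epsV k i j) : Fin 5 → k) A ≠ 0 := by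
      intro h0
      apply hepsV_ne i j hij
      apply hSinj
      rw [map_zero]
      apply Subtype.ext
      funext m'
      show (S (epsV k i j) : Fin 5 → k) m' = 0
      rw [hr1 m', h0, zero_mul]
    have hβ : (S (epsV k i' j') : Fin 5 → k) A ≠ 0 := by
      intro h0
      apply hepsV_ne i' j' hij'
      apply hSinj
      rw [map_zero]
      apply Subtype.ext
      funext m'
      show (S (epsV k i' j') : Fin 5 → k) m' = 0
      rw [hr2 m', h0, zero_mul]
    have hx : (S (epsV k i' j') : Fin 5 → k) A • epsV k i j
        - (S (epsV k i j) : Fin 5 → k) A • epsV k i' j' = 0 := by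
      apply hSinj
      rw [map_sub, map_smul, map_smul, map_zero]
      apply Subtype.ext
      funext m'
      show (S (epsV k i' j') : Fin 5 → k) A * (S (epsV k i j) : Fin 5 → k) m'
          - (S (epsV k i j) : Fin 5 → k) A * (S (epsV k i' j') : Fin 5 → k) m' = 0
      rw [hr1 m', hr2 m']
      ring
    have hxi : (S (epsV k i' j') : Fin 5 → k) A * eps k i j i
        - (S (epsV k i j) : Fin 5 → k) A * eps k i' j' i = 0 :=
      congrFun (congrArg Subtype.val hx) i
    have hxj : (S (epsV k i' j') : Fin 5 → k) A * eps k i j j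
        - (S (epsV k i j) : Fin 5 → k) A * eps k i' j' j = 0 :=
      congrFun (congrArg Subtype.val hx) j
    rw [eps_apply_left hij] at hxi
    rw [eps_apply_right hij] at hxj
    by_cases hii' : i = i'
    · left
      refine ⟨hii', ?_⟩
      by_cases hjj' : j = j'
      · exact hjj'
      exfalso
      rw [eps_apply_ne (show j ≠ i' from fun h => (Ne.symm hij) (h.trans hii'.symm)) hjj'] at hxj
      exact hβ (by linear_combination -hxj)
    by_cases hij2 : i = j'
    · right
      refine ⟨hij2, ?_⟩
      by_cases hji' : j = i'
      · exact hji'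
      exfalso
      rw [eps_apply_ne hji' (show j ≠ j' from fun h => (Ne.symm hij) (h.trans hij2.symm))] at hxj
      exact hβ (by linear_combination -hxj)
    · exfalso
      rw [eps_apply_ne hii' hij2] at hxi
      exact hβ (by linear_combination hxi)
  -- triangle identity
  have htriangle : ∀ i j l m : Fin 5, (S (epsV k i j) : Fin 5 → k) m
      + (S (epsV k j l) : Fin 5 → k) m + (S (epsV k l i) : Fin 5 → k) m = 0 := by
    intro i j l m
    have h0 : epsV k i j + epsV k j l + epsV k l i = 0 := by
      apply Subtype.ext
      funext m'
      show eps k i j m' + eps k j l m' + eps k l i m' = 0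
      simp only [eps]
      ring
    have h1 : S (epsV k i j) + S (epsV k j l) + S (epsV k l i) = 0 := by
      rw [← map_add, ← map_add, h0, map_zero]
    exact congrFun (congrArg Subtype.val h1) m
  -- T1 : adjacent pairs of a triangle intersect
  have T1 : ∀ i j l : Fin 5, i ≠ j → j ≠ l → i ≠ l →
      ∃ A, (S (epsV k i j) : Fin 5 → k) A ≠ 0 ∧ (S (epsV k j l) : Fin 5 → k) A ≠ 0 := by
    intro i j l hij hjl hil
    by_contra hno
    push_neg at hno
    have key : ∀ A, (S (epsV k i j) : Fin 5 → k) A ≠ 0 →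
        (S (epsV k l i) : Fin 5 → k) A ≠ 0 := by
      intro A hA
      have ht := htriangle i j l A
      rw [hno A hA] at ht
      intro h0
      rw [h0] at ht
      exact hA (by linear_combination ht)
    have key2' : ∀ A, (S (epsV k j l) : Fin 5 → k) A ≠ 0 →
        (S (epsV k l i) : Fin 5 → k) A ≠ 0 := by
      intro A hA
      have hij0 : (S (epsV k i j) : Fin 5 → k) A = 0 := by
        by_contra hh
        exact hA (hno A hh)
      have ht := htriangle i j l A
      rw [hij0] at ht
      intro h0
      rw [h0] at ht
      exact hA (by linear_combination ht)
    have m1 := key (P i j) (hMP i j hij)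
    have m2 := key (Q i j) ((hMchar i j hij (Q i j)).mpr (Or.inr rfl))
    have m3 := key2' (P j l) (hMP j l hjl)
    have e1 := (hMchar l i (Ne.symm hil) (P i j)).mp m1
    have e2 := (hMchar l i (Ne.symm hil) (Q i j)).mp m2
    have e3 := (hMchar l i (Ne.symm hil) (P j l)).mp m3
    have d1 := hPQne i j hij
    have d2 : P i j ≠ P j l := by
      intro h
      apply hMP j l hjl
      rw [← h]
      exact hno (P i j) (hMP i j hij)
    have d3 : Q i j ≠ P j l := by
      intro h
      apply hMP j l hjl
      rw [← h]
      exact hno (Q i j) ((hMchar i j hij (Q i j)).mpr (Or.inr rfl))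
    rcases e1 with h1 | h1 <;> rcases e2 with h2 | h2 <;> rcases e3 with h3 | h3 <;>
      first
        | exact d1 (h1.trans h2.symm)
        | exact d2 (h1.trans h3.symm)
        | exact d3 (h2.trans h3.symm)
  -- the other point of a support pair
  have hOther : ∀ i' j' m' : Fin 5, i' ≠ j' → (S (epsV k i' j') : Fin 5 → k) m' ≠ 0 →
      ∃ A, A ≠ m' ∧ (S (epsV k i' j') : Fin 5 → k) A ≠ 0 ∧
        (∀ l', l' ≠ m' → l' ≠ A → (S (epsV k i' j') : Fin 5 → k) l' = 0) := by
    intro i' j' m' h hm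
    rcases (hMchar i' j' h m').mp hm with h1 | h1
    · refine ⟨Q i' j', by rw [h1]; exact Ne.symm (hPQne i' j' h),
        (hMchar i' j' h (Q i' j')).mpr (Or.inr rfl), ?_⟩
      intro l' hl1 hl2
      by_contra h3
      rcases (hMchar i' j' h l').mp h3 with h4 | h4
      · exact hl1 (h4.trans h1.symm)
      · exact hl2 h4
    · refine ⟨P i' j', by rw [h1]; exact hPQne i' j' h, hMP i' j' h, ?_⟩
      intro l' hl1 hl2
      by_contra h3
      rcases (hMchar i' j' h l').mp h3 with h4 | h4
      · exact hl2 h4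
      · exact hl1 (h4.trans h1.symm)
  -- T2 : no point lies on all three pairs of a triangle
  have T2 : ∀ i j l m0 : Fin 5, i ≠ j → j ≠ l → i ≠ l →
      ¬((S (epsV k i j) : Fin 5 → k) m0 ≠ 0 ∧ (S (epsV k j l) : Fin 5 → k) m0 ≠ 0 ∧
        (S (epsV k l i) : Fin 5 → k) m0 ≠ 0) := by
    rintro i j l m0 hij hjl hil ⟨ha, hb, hd⟩
    obtain ⟨A, hAm, hAne, hAsupp⟩ := hOther i j m0 hij ha
    have hor : (S (epsV k j l) : Fin 5 → k) A ≠ 0 ∨ (S (epsV k l i) : Fin 5 → k) A ≠ 0 := by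
      by_contra hh
      push_neg at hh
      have ht := htriangle i j l A
      rw [hh.1, hh.2] at ht
      exact hAne (by linear_combination ht)
    rcases hor with hcase | hcase
    · have hsub := hsupp2' j l hjl m0 A (Ne.symm hAm) hb hcase
      have := hProp i j j l m0 A hij hjl (Ne.symm hAm) hAsupp hsub
      rcases this with ⟨h1, _⟩ | ⟨h1, _⟩
      · exact hij h1
      · exact hil h1
    · have hsub2 := hsupp2' l i (Ne.symm hil) m0 A (Ne.symm hAm) hd hcase
      have := hProp i j l i m0 A hij (Ne.symm hil) (Ne.symm hAm) hAsupp hsub2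
      rcases this with ⟨h1, _⟩ | ⟨_, h2⟩
      · exact hil h1
      · exact hjl h2
  -- common point of two pairs sharing the index i
  have hcom : ∀ i j l : Fin 5, i ≠ j → i ≠ l → j ≠ l →
      ∃ A, (S (epsV k i j) : Fin 5 → k) A ≠ 0 ∧ (S (epsV k i l) : Fin 5 → k) A ≠ 0 := by
    intro i j l hij hil hjl
    obtain ⟨A, h1, h2⟩ := T1 j i l (Ne.symm hij) hil hjl
    refine ⟨A, ?_, h2⟩
    rw [hanti i j A] at h1
    exact neg_ne_zero.mp h1
  -- the common point does not depend on the choice of the second pair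
  have hV : ∀ i j l l' : Fin 5, i ≠ j → i ≠ l → i ≠ l' → j ≠ l → j ≠ l' → l ≠ l' →
      ∀ A A', (S (epsV k i j) : Fin 5 → k) A ≠ 0 → (S (epsV k i l) : Fin 5 → k) A ≠ 0 →
      (S (epsV k i j) : Fin 5 → k) A' ≠ 0 → (S (epsV k i l') : Fin 5 → k) A' ≠ 0 →
      A = A' := by
    intro i j l l' hij hil hil' hjl hjl' hll' A A' hA1 hA2 hA1' hA2'
    by_contra hAA'
    have hsuppij := hsupp2' i j hij A A' hAA' hA1 hA1'
    obtain ⟨B, hB1, hB2⟩ := hcom i l l' hil hil' hll'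
    by_cases hBA : B = A
    · subst hBA
      have hsuppil' := hsupp2' i l' hil' B A' hAA' hB2 hA2'
      rcases hProp i j i l' B A' hij hil' hAA' hsuppij hsuppil' with ⟨_, h2⟩ | ⟨h1, _⟩
      · exact hjl' h2
      · exact hil' h1
    by_cases hBA' : B = A'
    · have hsuppil : ∀ m, m ≠ A → m ≠ A' → (S (epsV k i l) : Fin 5 → k) m = 0 := by
        intro m hm1 hm2
        exact hsupp2' i l hil A B (fun h => hBA h.symm) hA2 hB1 m hm1
          (fun hmB => hm2 (hmB.trans hBA'))
      rcases hProp i j i l A A' hij hil hAA' hsuppij hsuppil with ⟨_, hh2⟩ | ⟨hh1, _⟩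
      · exact hjl hh2
      · exact hil hh1
    · -- B distinct from A and A'
      have hll'B : (S (epsV k l l') : Fin 5 → k) B = 0 := by
        by_contra hh
        refine T2 i l l' B hil hll' hil' ⟨hB1, hh, ?_⟩
        rw [hanti i l' B]
        exact neg_ne_zero.mpr hB2
      obtain ⟨A1, g1, g2⟩ := T1 i l l' hil hll' hil'
      have hA1A : A1 = A := by
        by_cases h' : A1 = B
        · exfalso
          rw [h'] at g2
          exact g2 hll'B
        · by_contra h''
          exact g1 (hsupp2' i l hil A B (fun hh => hBA hh.symm) hA2 hB1 A1 h'' h')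
      have hyllA : (S (epsV k l l') : Fin 5 → k) A ≠ 0 := hA1A ▸ g2
      obtain ⟨A2, g1', g2'⟩ := T1 i l' l hil' (Ne.symm hll') hil
      have hA2A' : A2 = A' := by
        by_cases h' : A2 = B
        · exfalso
          rw [h', hanti l l' B] at g2'
          exact g2' (by rw [hll'B, neg_zero])
        · by_contra h''
          exact g1' (hsupp2' i l' hil' A' B (fun hh => hBA' hh.symm) hA2' hB2 A2 h'' h')
      have hyllA' : (S (epsV k l l') : Fin 5 → k) A' ≠ 0 := by
        have hthis := hA2A' ▸ g2'
        rw [hanti l l' A'] at hthis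
        exact neg_ne_zero.mp hthis
      have hsuppll' := hsupp2' l l' hll' A A' hAA' hyllA hyllA'
      rcases hProp i j l l' A A' hij hll' hAA' hsuppij hsuppll' with ⟨h1, _⟩ | ⟨h1, _⟩
      · exact hil h1
      · exact hil' h1
  -- the vertex map σ
  have hsig : ∀ i : Fin 5, ∃ A, ∀ j, j ≠ i → (S (epsV k i j) : Fin 5 → k) A ≠ 0 := by
    intro i
    obtain ⟨j0, l0, hj0l0, hj0i, hl0i⟩ := D4 i
    obtain ⟨A, hA1, hA2⟩ := hcom i j0 l0 (Ne.symm hj0i) (Ne.symm hl0i) hj0l0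
    refine ⟨A, fun j hji => ?_⟩
    by_cases h1 : j = j0
    · exact h1 ▸ hA1
    by_cases h2 : j = l0
    · exact h2 ▸ hA2
    obtain ⟨A'', hA''1, hA''2⟩ := hcom i j0 j (Ne.symm hj0i) (Ne.symm hji)
      (fun h => h1 h.symm)
    have hAA : A = A'' := hV i j0 l0 j (Ne.symm hj0i) (Ne.symm hl0i) (Ne.symm hji)
      hj0l0 (fun h => h1 h.symm) (fun h => h2 h.symm) A A'' hA1 hA2 hA''1 hA''2
    rw [hAA]
    exact hA''2
  choose σf hσf using hsig
  have hσinj : Function.Injective σf := by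
    intro i i' h
    by_contra hne
    obtain ⟨l, hl1, hl2, _, _⟩ := D3 i i' i i'
    have g1 : (S (epsV k i i') : Fin 5 → k) (σf i) ≠ 0 := hσf i i' (Ne.symm hne)
    have g2 : (S (epsV k i' l) : Fin 5 → k) (σf i) ≠ 0 := by
      rw [h]
      exact hσf i' l hl2
    have g3 : (S (epsV k l i) : Fin 5 → k) (σf i) ≠ 0 := by
      rw [hanti i l (σf i)]
      exact neg_ne_zero.mpr (hσf i l hl1)
    exact T2 i i' l (σf i) hne (Ne.symm hl2) (Ne.symm hl1) ⟨g1, g2, g3⟩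
  -- support of S(eps i j) is {σ i, σ j}
  have hsuppσ : ∀ i j, i ≠ j → ∀ m, m ≠ σf i → m ≠ σf j →
      (S (epsV k i j) : Fin 5 → k) m = 0 := by
    intro i j hij m h1 h2
    have hσi : (S (epsV k i j) : Fin 5 → k) (σf i) ≠ 0 := hσf i j (Ne.symm hij)
    have hσj : (S (epsV k i j) : Fin 5 → k) (σf j) ≠ 0 := by
      rw [show (S (epsV k i j) : Fin 5 → k) (σf j)
          = -(S (epsV k j i) : Fin 5 → k) (σf j) by rw [hanti j i]]
      exact neg_ne_zero.mpr (hσf j i hij)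
    exact hsupp2' i j hij (σf i) (σf j) (fun h => hij (hσinj h)) hσi hσj m h1 h2
  have hrepσ : ∀ i j, i ≠ j → ∀ m, (S (epsV k i j) : Fin 5 → k) m
      = (S (epsV k i j) : Fin 5 → k) (σf i) * eps k (σf i) (σf j) m := by
    intro i j hij
    exact rep_of_support _ (hsumv _) (σf i) (σf j) (fun h => hij (hσinj h)) (hsuppσ i j hij)
  -- the scalar attached to a pair
  have hsne : ∀ i j, i ≠ j → (S (epsV k i j) : Fin 5 → k) (σf i) ≠ 0 :=
    fun i j hij => hσf i j (Ne.symm hij)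
  have hssymm : ∀ i j, i ≠ j → (S (epsV k i j) : Fin 5 → k) (σf i)
      = (S (epsV k j i) : Fin 5 → k) (σf j) := by
    intro i j hij
    have h1 : (S (epsV k j i) : Fin 5 → k) (σf j)
        = -(S (epsV k i j) : Fin 5 → k) (σf j) := hanti i j (σf j)
    rw [h1, hrepσ i j hij (σf j), eps_apply_right (fun h => hij (hσinj h))]
    ring
  have hclaim1 : ∀ i j l, i ≠ j → i ≠ l → j ≠ l →
      (S (epsV k i j) : Fin 5 → k) (σf i) = (S (epsV k i l) : Fin 5 → k) (σf i) := by
    intro i j l hij hil hjl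
    have ht := htriangle i j l (σf i)
    have hz : (S (epsV k j l) : Fin 5 → k) (σf i) = 0 := by
      apply hsuppσ j l hjl
      · exact fun h => hij (hσinj h)
      · exact fun h => hil (hσinj h)
    have hli : (S (epsV k l i) : Fin 5 → k) (σf i)
        = -(S (epsV k i l) : Fin 5 → k) (σf i) := hanti i l (σf i)
    rw [hz, hli] at ht
    linear_combination ht
  -- the scalar is the same for all pairs
  have hsconst : ∀ i j i' j' : Fin 5, i ≠ j → i' ≠ j' →
      (S (epsV k i j) : Fin 5 → k) (σf i) = (S (epsV k i' j') : Fin 5 → k) (σf i') := by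
    intro i j i' j' hij hij'
    obtain ⟨l, hl1, hl2, hl3, hl4⟩ := D3 i j i' j'
    have c1 : (S (epsV k i j) : Fin 5 → k) (σf i)
        = (S (epsV k i l) : Fin 5 → k) (σf i) := hclaim1 i j l hij (Ne.symm hl1) (Ne.symm hl2)
    have c2 : (S (epsV k i l) : Fin 5 → k) (σf i)
        = (S (epsV k l i) : Fin 5 → k) (σf l) := hssymm i l (Ne.symm hl1)
    have c3 : (S (epsV k l i) : Fin 5 → k) (σf l)
        = (S (epsV k l i') : Fin 5 → k) (σf l) := by
      by_cases h : i = i'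
      · rw [h]
      · exact hclaim1 l i i' hl1 hl3 h
    have c4 : (S (epsV k l i') : Fin 5 → k) (σf l)
        = (S (epsV k i' l) : Fin 5 → k) (σf i') := (hssymm i' l (Ne.symm hl3)).symm
    have c5 : (S (epsV k i' l) : Fin 5 → k) (σf i')
        = (S (epsV k i' j') : Fin 5 → k) (σf i') :=
      (hclaim1 i' j' l hij' (Ne.symm hl3) (Ne.symm hl4)).symm
    rw [c1, c2, c3, c4, c5]
  set ν : k := (S (epsV k 0 1) : Fin 5 → k) (σf 0) with hνdef
  have hν : ν ≠ 0 := hsne 0 1 (by decide)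
  have hsν : ∀ i j, i ≠ j → (S (epsV k i j) : Fin 5 → k) (σf i) = ν :=
    fun i j h => hsconst i j 0 1 h (by decide)
  -- decomposition of a general vector
  have hdecomp : ∀ v : V0 k, v = ∑ i' : Fin 5, (v : Fin 5 → k) i' • epsV k i' 0 := by
    intro v
    apply Subtype.ext
    funext m
    have hcoe : ((∑ i' : Fin 5, (v : Fin 5 → k) i' • epsV k i' 0 : V0 k) : Fin 5 → k) m
        = ∑ i' : Fin 5, (v : Fin 5 → k) i' * eps k i' 0 m := by
      rw [AddSubmonoidClass.coe_finset_sum, Finset.sum_apply]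
      rfl
    rw [hcoe]
    simp only [eps, mul_sub, mul_ite, mul_one, mul_zero]
    rw [Finset.sum_sub_distrib]
    have hfst : (∑ i' : Fin 5, if m = i' then (v : Fin 5 → k) i' else 0)
        = (v : Fin 5 → k) m := by
      rw [Finset.sum_ite_eq]
      exact if_pos (Finset.mem_univ m)
    have hsnd : (∑ i' : Fin 5, if m = 0 then (v : Fin 5 → k) i' else 0) = 0 := by
      by_cases hm0 : m = 0
      · simp only [if_pos hm0]
        exact hsumv v
      · simp [hm0]
    rw [hfst, hsnd, sub_zero]
  -- value of each transformed basis vector at σ i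
  have hterm : ∀ i i' : Fin 5, (S (epsV k i' 0) : Fin 5 → k) (σf i)
      = ν * ((if i' = i then (1:k) else 0) - (if i = 0 then 1 else 0)) := by
    intro i i'
    by_cases h0 : i' = 0
    · subst h0
      rw [epsV_self, map_zero]
      simp only [ZeroMemClass.coe_zero, Pi.zero_apply]
      by_cases hi : i = 0
      · subst hi
        simp
      · rw [if_neg (fun hh : (0:Fin 5) = i => hi hh.symm), if_neg hi]
        ring
    · rw [hrepσ i' 0 h0 (σf i), hsν i' 0 h0]
      show ν * ((if σf i = σf i' then (1:k) else 0) - (if σf i = σf 0 then 1 else 0)) = _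
      have e1 : (if σf i = σf i' then (1:k) else 0) = (if i' = i then 1 else 0) := by
        by_cases h : i' = i
        · rw [if_pos h, if_pos (by rw [h])]
        · rw [if_neg h, if_neg (fun hh => h (hσinj hh).symm)]
      have e2 : (if σf i = σf 0 then (1:k) else 0) = (if i = 0 then 1 else 0) := by
        by_cases h : i = 0
        · rw [if_pos h, if_pos (by rw [h])]
        · rw [if_neg h, if_neg (fun hh => h (hσinj hh))]
      rw [e1, e2]
  -- the final formula for S
  have hfinal : ∀ (v : V0 k) (i : Fin 5),
      (S v : Fin 5 → k) (σf i) = ν * (v : Fin 5 → k) i := by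
    intro v i
    have hSv : S v = ∑ i' : Fin 5, (v : Fin 5 → k) i' • S (epsV k i' 0) := by
      conv_lhs => rw [hdecomp v]
      rw [map_sum]
      exact Finset.sum_congr rfl fun i' _ => by rw [map_smul]
    have hev : (S v : Fin 5 → k) (σf i)
        = ∑ i' : Fin 5, (v : Fin 5 → k) i' * (S (epsV k i' 0) : Fin 5 → k) (σf i) := by
      rw [hSv, AddSubmonoidClass.coe_finset_sum, Finset.sum_apply]
      rfl
    rw [hev]
    have hev2 : ∀ i' : Fin 5, (v : Fin 5 → k) i' * (S (epsV k i' 0) : Fin 5 → k) (σf i)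
        = ν * (if i' = i then (v : Fin 5 → k) i' else 0)
          - ν * (if i = 0 then (v : Fin 5 → k) i' else 0) := by
      intro i'
      rw [hterm i i']
      by_cases h1 : i' = i
      · by_cases h2 : i = 0
        · simp only [if_pos h1, if_pos h2]; ring
        · simp only [if_pos h1, if_neg h2]; ring
      · by_cases h2 : i = 0
        · simp only [if_neg h1, if_pos h2]; ring
        · simp only [if_neg h1, if_neg h2]; ring
    rw [Finset.sum_congr rfl fun i' _ => hev2 i', Finset.sum_sub_distrib]
    rw [← Finset.mul_sum, ← Finset.mul_sum]
    have hfst : (∑ i' : Fin 5, if i' = i then (v : Fin 5 → k) i' else 0)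
        = (v : Fin 5 → k) i := by
      rw [Finset.sum_ite_eq']
      exact if_pos (Finset.mem_univ i)
    have hsnd : (∑ i' : Fin 5, if i = 0 then (v : Fin 5 → k) i' else 0) = 0 := by
      by_cases hm0 : i = 0
      · simp only [if_pos hm0]
        exact hsumv v
      · simp [hm0]
    rw [hfst, hsnd, mul_zero, sub_zero]
  -- reindexing and the coefficient relation
  have hσbij : Function.Bijective σf := Finite.injective_iff_bijective.mp hσinj
  have hzero : ∀ v : V0 k,
      ∑ i, (c' (σf i) * ν ^ 3 - (lam : k) * c i) * ((v : Fin 5 → k) i) ^ 3 = 0 := by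
    intro v
    have e := hinv v
    have hre : ∑ m, c' m * ((S v : Fin 5 → k) m) ^ 3
        = ∑ i, c' (σf i) * ((S v : Fin 5 → k) (σf i)) ^ 3 :=
      (Fintype.sum_bijective σf hσbij _ _ (fun i => rfl)).symm
    rw [hre] at e
    have e2 : ∑ i, c' (σf i) * (ν * (v : Fin 5 → k) i) ^ 3
        = (lam : k) * ∑ i, c i * ((v : Fin 5 → k) i) ^ 3 := by
      rw [← e]
      exact Finset.sum_congr rfl fun i _ => by rw [hfinal v i]
    calc ∑ i, (c' (σf i) * ν ^ 3 - (lam : k) * c i) * ((v : Fin 5 → k) i) ^ 3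
        = (∑ i, c' (σf i) * (ν * (v : Fin 5 → k) i) ^ 3)
          - (lam : k) * ∑ i, c i * ((v : Fin 5 → k) i) ^ 3 := by
          rw [Finset.mul_sum, ← Finset.sum_sub_distrib]
          exact Finset.sum_congr rfl fun i _ => by ring
      _ = 0 := by rw [e2, sub_self]
  have hbc : ∀ i j : Fin 5, i ≠ j → c' (σf i) * ν ^ 3 - (lam : k) * c i
      = c' (σf j) * ν ^ 3 - (lam : k) * c j := by
    intro i j hij
    have h := hzero (epsV k i j)
    simp only [epsV_coe] at h
    have h' : ∑ m, (c' (σf m) * ν ^ 3 - (lam : k) * c m) * eps k i j m = 0 := by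
      rw [← h]
      refine Finset.sum_congr rfl fun m _ => ?_
      have hcube : (eps k i j m) ^ 3 = eps k i j m := by
        rcases eq_or_ne m i with rfl | h1
        · rw [eps_apply_left hij]; norm_num
        rcases eq_or_ne m j with rfl | h2
        · rw [eps_apply_right hij]; norm_num
        · rw [eps_apply_ne h1 h2]; norm_num
      rw [hcube]
    rw [sum_mul_eps] at h'
    exact sub_eq_zero.mp h'
  have hb0 : ∀ i : Fin 5, c' (σf i) * ν ^ 3 - (lam : k) * c i
      = c' (σf 0) * ν ^ 3 - (lam : k) * c 0 := by
    intro i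
    by_cases h0 : i = 0
    · rw [h0]
    · exact hbc i 0 h0
  have hB0 : c' (σf 0) * ν ^ 3 - (lam : k) * c 0 = 0 := by
    have h := hzero (epsV k 0 2 + epsV k 1 2)
    have hco : ∀ m, ((epsV k 0 2 + epsV k 1 2 : V0 k) : Fin 5 → k) m
        = eps k 0 2 m + eps k 1 2 m := fun m => rfl
    simp only [hco] at h
    rw [Fin.sum_univ_five] at h
    rw [eps_apply_left (show (0:Fin 5) ≠ 2 by decide),
      eps_apply_ne (show (0:Fin 5) ≠ 1 by decide) (show (0:Fin 5) ≠ 2 by decide),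
      eps_apply_ne (show (1:Fin 5) ≠ 0 by decide) (show (1:Fin 5) ≠ 2 by decide),
      eps_apply_left (show (1:Fin 5) ≠ 2 by decide),
      eps_apply_right (show (0:Fin 5) ≠ 2 by decide),
      eps_apply_right (show (1:Fin 5) ≠ 2 by decide),
      eps_apply_ne (show (3:Fin 5) ≠ 0 by decide) (show (3:Fin 5) ≠ 2 by decide),
      eps_apply_ne (show (3:Fin 5) ≠ 1 by decide) (show (3:Fin 5) ≠ 2 by decide),
      eps_apply_ne (show (4:Fin 5) ≠ 0 by decide) (show (4:Fin 5) ≠ 2 by decide),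
      eps_apply_ne (show (4:Fin 5) ≠ 1 by decide) (show (4:Fin 5) ≠ 2 by decide)] at h
    have h1 := hb0 1
    have h2 := hb0 2
    have h66 : (6:k) * (c' (σf 0) * ν ^ 3 - (lam : k) * c 0) = 0 := by
      linear_combination -h + h1 - 8 * h2
    exact (mul_eq_zero.mp h66).resolve_left h6
  have hbeq : ∀ i : Fin 5, c' (σf i) * ν ^ 3 = (lam : k) * c i := by
    intro i
    have := (hb0 i).trans hB0
    linear_combination this
  -- conclusion
  have hμne : (lam : k) * (ν ^ 3)⁻¹ ≠ 0 :=
    mul_ne_zero (Units.ne_zero lam) (inv_ne_zero (pow_ne_zero 3 hν))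
  refine ⟨Equiv.ofBijective σf hσbij, Units.mk0 ((lam : k) * (ν ^ 3)⁻¹) hμne,
    Units.mk0 ν hν, ?_, ?_⟩
  · intro i
    have hb := hbeq i
    have hν3 : (ν : k) ^ 3 ≠ 0 := pow_ne_zero 3 hν
    show c' (σf i) = (lam : k) * (ν ^ 3)⁻¹ * c i
    field_simp
    linear_combination hb
  · intro v i
    exact hfinal v i
end

section
/- Assume char k ≠ 2 and let ε ∈ k satisfy ε⁸ = 1 and ε⁴ ≠ 1 (a primitive 8th root of unity). Let F be a nonzero homogeneous polynomial of degree 3 in k[x₀,x₁,x₂,x₃] with V(F) smooth such that F(x₀, ε⁶x₁, εx₂, ε⁴x₃) = F(x₀, x₁, x₂, x₃). Then there exist an invertible diagonal matrix D ∈ GL₄(k) and c ∈ kˣ such that c·F(D·x) = x₀³ + x₀x₃² − x₁x₂² + x₁²x₃. In particular, up to projective equivalence there is exactly one smooth cubic surface admitting an automorphism of class 8A. -/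
open MvPolynomial Matrix

section Stmt18Aux

variable {k : Type*} [Field k]

lemma substMatrix_diagonal (D : Fin 4 → k) (F : MvPolynomial (Fin 4) k) :
    substMatrix (Matrix.diagonal D) F = aeval (fun i => C (D i) * X i) F := by
  unfold substMatrix
  have h : (fun i => ∑ j, C (diagonal D i j) * X j)
      = fun i : Fin 4 => (C (D i) * X i : MvPolynomial (Fin 4) k) := by
    funext i
    rw [Finset.sum_eq_single i]
    · rw [Matrix.diagonal_apply_eq]
    · intro j _ hj
      rw [Matrix.diagonal_apply_ne D (Ne.symm hj), map_zero, zero_mul]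
    · intro h; exact absurd (Finset.mem_univ i) h
  rw [h]

lemma aeval_scale_monomial (D : Fin 4 → k) (m : Fin 4 →₀ ℕ) (c : k) :
    aeval (fun i => C (D i) * X i) (monomial m c)
      = monomial m ((∏ i, D i ^ m i) * c) := by
  rw [aeval_monomial]
  have h1 : (m.prod fun i e => (C (D i) * X i : MvPolynomial (Fin 4) k) ^ e)
      = (m.prod fun i e => (C (D i) : MvPolynomial (Fin 4) k) ^ e)
        * m.prod fun i e => (X i : MvPolynomial (Fin 4) k) ^ e := by
    rw [← Finsupp.prod_mul]
    exact Finsupp.prod_congr fun i _ => by rw [mul_pow]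
  rw [h1, Finsupp.prod_pow, monomial_eq]
  have h2 : (∏ a, (C (D a) : MvPolynomial (Fin 4) k) ^ m a) = C (∏ a, D a ^ m a) := by
    rw [map_prod]
    exact Finset.prod_congr rfl fun a _ => by rw [C_pow]
  rw [algebraMap_eq, ← mul_assoc, h2, ← C_mul, mul_comm c]

lemma coeff_substMatrix_diagonal (D : Fin 4 → k) (F : MvPolynomial (Fin 4) k)
    (m : Fin 4 →₀ ℕ) :
    coeff m (substMatrix (Matrix.diagonal D) F) = (∏ i, D i ^ m i) * coeff m F := by
  rw [substMatrix_diagonal]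
  conv_lhs => rw [F.as_sum]
  rw [map_sum, coeff_sum]
  conv_rhs => rw [F.as_sum, coeff_sum]
  rw [Finset.mul_sum]
  refine Finset.sum_congr rfl fun m' _ => ?_
  rw [aeval_scale_monomial, coeff_monomial, coeff_monomial]
  split_ifs with h
  · subst h; ring
  · ring

end Stmt18Aux

/-- The four exponent vectors of the invariant monomials. -/
noncomputable def stmt18mA : Fin 4 →₀ ℕ := Finsupp.single 0 3
noncomputable def stmt18mB : Fin 4 →₀ ℕ := Finsupp.single 0 1 + Finsupp.single 3 2
noncomputable def stmt18mC : Fin 4 →₀ ℕ := Finsupp.single 1 1 + Finsupp.single 2 2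
noncomputable def stmt18mD : Fin 4 →₀ ℕ := Finsupp.single 1 2 + Finsupp.single 3 1

section Stmt18Aux2

variable {k : Type*} [Field k]

lemma stmt18_CmulA (a : k) : C a * (X 0 ^ 3 : MvPolynomial (Fin 4) k) = monomial stmt18mA a := by
  rw [stmt18mA, X_pow_eq_monomial, C_mul_monomial, mul_one]

lemma stmt18_CmulB (a : k) :
    C a * (X 0 * X 3 ^ 2 : MvPolynomial (Fin 4) k) = monomial stmt18mB a := by
  rw [stmt18mB, show (X 0 : MvPolynomial (Fin 4) k) = X 0 ^ 1 from (pow_one _).symm,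
    X_pow_eq_monomial, X_pow_eq_monomial, monomial_mul, C_mul_monomial, mul_one, mul_one]

lemma stmt18_CmulC (a : k) :
    C a * (X 1 * X 2 ^ 2 : MvPolynomial (Fin 4) k) = monomial stmt18mC a := by
  rw [stmt18mC, show (X 1 : MvPolynomial (Fin 4) k) = X 1 ^ 1 from (pow_one _).symm,
    X_pow_eq_monomial, X_pow_eq_monomial, monomial_mul, C_mul_monomial, mul_one, mul_one]

lemma stmt18_CmulD (a : k) :
    C a * (X 1 ^ 2 * X 3 : MvPolynomial (Fin 4) k) = monomial stmt18mD a := by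
  rw [stmt18mD, show (X 3 : MvPolynomial (Fin 4) k) = X 3 ^ 1 from (pow_one _).symm,
    X_pow_eq_monomial, X_pow_eq_monomial, monomial_mul, C_mul_monomial, mul_one, mul_one]

lemma stmt18mA_ne_mB : stmt18mA ≠ stmt18mB := by
  intro h; have := DFunLike.congr_fun h 0
  simp [stmt18mA, stmt18mB, Finsupp.single_apply] at this
lemma stmt18mA_ne_mC : stmt18mA ≠ stmt18mC := by
  intro h; have := DFunLike.congr_fun h 0
  simp [stmt18mA, stmt18mC, Finsupp.single_apply] at this
lemma stmt18mA_ne_mD : stmt18mA ≠ stmt18mD := by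
  intro h; have := DFunLike.congr_fun h 0
  simp [stmt18mA, stmt18mD, Finsupp.single_apply] at this
lemma stmt18mB_ne_mC : stmt18mB ≠ stmt18mC := by
  intro h; have := DFunLike.congr_fun h 0
  simp [stmt18mB, stmt18mC, Finsupp.single_apply] at this
lemma stmt18mB_ne_mD : stmt18mB ≠ stmt18mD := by
  intro h; have := DFunLike.congr_fun h 0
  simp [stmt18mB, stmt18mD, Finsupp.single_apply] at this
lemma stmt18mC_ne_mD : stmt18mC ≠ stmt18mD := by
  intro h; have := DFunLike.congr_fun h 1
  simp [stmt18mC, stmt18mD, Finsupp.single_apply] at this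

lemma stmt18_eq_mA {m : Fin 4 →₀ ℕ} (h0 : m 0 = 3) (h1 : m 1 = 0) (h2 : m 2 = 0)
    (h3 : m 3 = 0) : m = stmt18mA := by
  ext i; fin_cases i <;> simp [stmt18mA, Finsupp.single_apply, h0, h1, h2, h3]

lemma stmt18_eq_mB {m : Fin 4 →₀ ℕ} (h0 : m 0 = 1) (h1 : m 1 = 0) (h2 : m 2 = 0)
    (h3 : m 3 = 2) : m = stmt18mB := by
  ext i; fin_cases i <;> simp [stmt18mB, Finsupp.single_apply, h0, h1, h2, h3]

lemma stmt18_eq_mC {m : Fin 4 →₀ ℕ} (h0 : m 0 = 0) (h1 : m 1 = 1) (h2 : m 2 = 2)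
    (h3 : m 3 = 0) : m = stmt18mC := by
  ext i; fin_cases i <;> simp [stmt18mC, Finsupp.single_apply, h0, h1, h2, h3]

lemma stmt18_eq_mD {m : Fin 4 →₀ ℕ} (h0 : m 0 = 0) (h1 : m 1 = 2) (h2 : m 2 = 0)
    (h3 : m 3 = 1) : m = stmt18mD := by
  ext i; fin_cases i <;> simp [stmt18mD, Finsupp.single_apply, h0, h1, h2, h3]

lemma stmt18_arith (a b c d : ℕ) (h : a + b + c + d = 3) (hk : 8 ∣ 6 * b + c + 4 * d) :
    (a = 3 ∧ b = 0 ∧ c = 0 ∧ d = 0) ∨ (a = 1 ∧ b = 0 ∧ c = 0 ∧ d = 2) ∨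
    (a = 0 ∧ b = 1 ∧ c = 2 ∧ d = 0) ∨ (a = 0 ∧ b = 2 ∧ c = 0 ∧ d = 1) := by
  have hb : b ≤ 3 := by omega
  have hc : c ≤ 3 := by omega
  have hd : d ≤ 3 := by omega
  interval_cases b <;> interval_cases c <;> interval_cases d <;> omega

lemma stmt18_decomp {F : MvPolynomial (Fin 4) k}
    (h : ∀ m, coeff m F ≠ 0 → m = stmt18mA ∨ m = stmt18mB ∨ m = stmt18mC ∨ m = stmt18mD) :
    F = C (coeff stmt18mA F) * X 0 ^ 3 + C (coeff stmt18mB F) * (X 0 * X 3 ^ 2)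
      + C (coeff stmt18mC F) * (X 1 * X 2 ^ 2) + C (coeff stmt18mD F) * (X 1 ^ 2 * X 3) := by
  rw [stmt18_CmulA, stmt18_CmulB, stmt18_CmulC, stmt18_CmulD]
  apply MvPolynomial.ext
  intro m
  rw [coeff_add, coeff_add, coeff_add, coeff_monomial, coeff_monomial, coeff_monomial,
    coeff_monomial]
  by_cases hA : stmt18mA = m
  · subst hA
    rw [if_pos rfl, if_neg (fun h' => stmt18mA_ne_mB h'.symm),
      if_neg (fun h' => stmt18mA_ne_mC h'.symm), if_neg (fun h' => stmt18mA_ne_mD h'.symm)]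
    ring
  by_cases hB : stmt18mB = m
  · subst hB
    rw [if_neg hA, if_pos rfl, if_neg (fun h' => stmt18mB_ne_mC h'.symm),
      if_neg (fun h' => stmt18mB_ne_mD h'.symm)]
    ring
  by_cases hC : stmt18mC = m
  · subst hC
    rw [if_neg hA, if_neg hB, if_pos rfl, if_neg (fun h' => stmt18mC_ne_mD h'.symm)]
    ring
  by_cases hD : stmt18mD = m
  · subst hD
    rw [if_neg hA, if_neg hB, if_neg hC, if_pos rfl]
    ring
  rw [if_neg hA, if_neg hB, if_neg hC, if_neg hD]
  by_contra hm
  rcases h m (fun h' => hm (by rw [h']; ring)) with rfl | rfl | rfl | rfl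
  · exact hA rfl
  · exact hB rfl
  · exact hC rfl
  · exact hD rfl

lemma stmt18_pd0 (a b c d : k) :
    pderiv 0 (C a * X 0 ^ 3 + C b * (X 0 * X 3 ^ 2) + C c * (X 1 * X 2 ^ 2)
      + C d * (X 1 ^ 2 * X 3) : MvPolynomial (Fin 4) k)
    = 3 * C a * X 0 ^ 2 + C b * X 3 ^ 2 := by
  simp [pderiv_C_mul, pderiv_mul, pderiv_pow]
  ring

lemma stmt18_pd1 (a b c d : k) :
    pderiv 1 (C a * X 0 ^ 3 + C b * (X 0 * X 3 ^ 2) + C c * (X 1 * X 2 ^ 2)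
      + C d * (X 1 ^ 2 * X 3) : MvPolynomial (Fin 4) k)
    = C c * X 2 ^ 2 + 2 * C d * (X 1 * X 3) := by
  simp [pderiv_C_mul, pderiv_mul, pderiv_pow]
  ring

lemma stmt18_pd2 (a b c d : k) :
    pderiv 2 (C a * X 0 ^ 3 + C b * (X 0 * X 3 ^ 2) + C c * (X 1 * X 2 ^ 2)
      + C d * (X 1 ^ 2 * X 3) : MvPolynomial (Fin 4) k)
    = 2 * C c * (X 1 * X 2) := by
  simp [pderiv_C_mul, pderiv_mul, pderiv_pow]
  ring

lemma stmt18_pd3 (a b c d : k) :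
    pderiv 3 (C a * X 0 ^ 3 + C b * (X 0 * X 3 ^ 2) + C c * (X 1 * X 2 ^ 2)
      + C d * (X 1 ^ 2 * X 3) : MvPolynomial (Fin 4) k)
    = 2 * C b * (X 0 * X 3) + C d * X 1 ^ 2 := by
  simp [pderiv_C_mul, pderiv_mul, pderiv_pow]
  ring

end Stmt18Aux2

set_option maxHeartbeats 1600000 in
/-- In characteristic `≠ 2`, a smooth cubic surface invariant
under the diagonal automorphism `diag(1, ε⁶, ε, ε⁴)` of class 8A (`ε` a
primitive 8th root of unity) is projectively equivalent, via a diagonal change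
of coordinates, to `x₀³ + x₀x₃² − x₁x₂² + x₁²x₃ = 0`; in particular there is
exactly one such surface up to isomorphism. -/
theorem stmt18 {k : Type*} [Field k] [IsAlgClosed k] (h2 : ringChar k ≠ 2)
    (ε : k) (hε8 : ε ^ 8 = 1) (hε4 : ε ^ 4 ≠ 1)
    (F : MvPolynomial (Fin 4) k) (hF0 : F ≠ 0) (hhom : F.IsHomogeneous 3)
    (hsmooth : ∀ x : Fin 4 → k,
      eval x F = 0 → (∀ i, eval x (pderiv i F) = 0) → x = 0)
    (hinv : substMatrix (Matrix.diagonal ![1, ε ^ 6, ε, ε ^ 4]) F = F) :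
    ∃ (D : Fin 4 → k) (c : kˣ), (∀ i, D i ≠ 0) ∧
      (c : k) • substMatrix (Matrix.diagonal D) F =
        X 0 ^ 3 + X 0 * X 3 ^ 2 - X 1 * X 2 ^ 2 + X 1 ^ 2 * X 3 := by
  classical
  -- the order of ε is 8
  have hord : orderOf ε = 8 := by
    have h1 : orderOf ε ∣ 8 := orderOf_dvd_of_pow_eq_one hε8
    have h2' : ¬ orderOf ε ∣ 4 := fun h => hε4 (orderOf_dvd_iff_pow_eq_one.mp h)
    have h3 : orderOf ε ≤ 8 := Nat.le_of_dvd (by norm_num) h1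
    interval_cases h : orderOf ε <;> omega
  have horder : ∀ n : ℕ, ε ^ n = 1 ↔ 8 ∣ n := by
    intro n
    rw [← orderOf_dvd_iff_pow_eq_one, hord]
  -- the product of the diagonal entries
  have hprod : ∀ m : Fin 4 →₀ ℕ,
      (∏ i, (![1, ε ^ 6, ε, ε ^ 4] : Fin 4 → k) i ^ m i)
        = ε ^ (6 * m 1 + m 2 + 4 * m 3) := by
    intro m
    rw [Fin.prod_univ_four]
    simp only [Matrix.cons_val_zero, Matrix.cons_val_one, Matrix.head_cons,
      Matrix.cons_val_two, Matrix.tail_cons, Matrix.cons_val_three]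
    rw [one_pow, one_mul, ← pow_mul, ← pow_mul, ← pow_add, ← pow_add]
  -- invariance kills all monomials except four
  have hker : ∀ m : Fin 4 →₀ ℕ, coeff m F ≠ 0 → 8 ∣ 6 * m 1 + m 2 + 4 * m 3 := by
    intro m hm
    have h := congrArg (coeff m) hinv
    rw [coeff_substMatrix_diagonal, hprod] at h
    exact (horder _).mp (mul_right_cancel₀ hm (h.trans (one_mul (coeff m F)).symm))
  -- homogeneity: exponents sum to 3
  have hdegree_eq : ∀ m : Fin 4 →₀ ℕ, m.degree = m 0 + m 1 + m 2 + m 3 := by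
    intro m
    have h : m.degree = ∑ i ∈ m.support, m i := rfl
    rw [h, Finset.sum_subset (Finset.subset_univ _)
      (fun i _ hi => Finsupp.notMem_support_iff.mp hi), Fin.sum_univ_four]
  have hdeg : ∀ m : Fin 4 →₀ ℕ, coeff m F ≠ 0 → m 0 + m 1 + m 2 + m 3 = 3 := by
    intro m hm
    by_contra hne
    exact hm (hhom.coeff_eq_zero (by rw [hdegree_eq]; exact hne))
  -- classification of the support
  have hclass : ∀ m : Fin 4 →₀ ℕ, coeff m F ≠ 0 →
      m = stmt18mA ∨ m = stmt18mB ∨ m = stmt18mC ∨ m = stmt18mD := by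
    intro m hm
    rcases stmt18_arith (m 0) (m 1) (m 2) (m 3) (hdeg m hm) (hker m hm) with
      ⟨h0, h1, h2, h3⟩ | ⟨h0, h1, h2, h3⟩ | ⟨h0, h1, h2, h3⟩ | ⟨h0, h1, h2, h3⟩
    · exact Or.inl (stmt18_eq_mA h0 h1 h2 h3)
    · exact Or.inr (Or.inl (stmt18_eq_mB h0 h1 h2 h3))
    · exact Or.inr (Or.inr (Or.inl (stmt18_eq_mC h0 h1 h2 h3)))
    · exact Or.inr (Or.inr (Or.inr (stmt18_eq_mD h0 h1 h2 h3)))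
  have Feq := stmt18_decomp hclass
  set a : k := coeff stmt18mA F with ha
  set b : k := coeff stmt18mB F with hb
  set c : k := coeff stmt18mC F with hc
  set d : k := coeff stmt18mD F with hd
  -- all four coefficients are nonzero, by smoothness
  have hA : a ≠ 0 := by
    intro h0
    rw [h0] at Feq
    have hx := hsmooth ![1, 0, 0, 0] (by rw [Feq]; simp)
      (by intro i; fin_cases i <;>
        simp [Feq, stmt18_pd0, stmt18_pd1, stmt18_pd2, stmt18_pd3])
    exact (one_ne_zero : (1:k) ≠ 0) (by simpa using congrFun hx 0)
  have hB : b ≠ 0 := by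
    intro h0
    rw [h0] at Feq
    have hx := hsmooth ![0, 0, 0, 1] (by rw [Feq]; simp)
      (by intro i; fin_cases i <;>
        simp [Feq, stmt18_pd0, stmt18_pd1, stmt18_pd2, stmt18_pd3])
    exact (one_ne_zero : (1:k) ≠ 0) (by simpa using congrFun hx 3)
  have hC : c ≠ 0 := by
    intro h0
    rw [h0] at Feq
    have hx := hsmooth ![0, 0, 1, 0] (by rw [Feq]; simp)
      (by intro i; fin_cases i <;>
        simp [Feq, stmt18_pd0, stmt18_pd1, stmt18_pd2, stmt18_pd3])
    exact (one_ne_zero : (1:k) ≠ 0) (by simpa using congrFun hx 2)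
  have hD : d ≠ 0 := by
    intro h0
    rw [h0] at Feq
    have hx := hsmooth ![0, 1, 0, 0] (by rw [Feq]; simp)
      (by intro i; fin_cases i <;>
        simp [Feq, stmt18_pd0, stmt18_pd1, stmt18_pd2, stmt18_pd3])
    exact (one_ne_zero : (1:k) ≠ 0) (by simpa using congrFun hx 1)
  -- extract the roots needed for the rescaling
  obtain ⟨D0, hD0⟩ := IsAlgClosed.exists_pow_nat_eq (k := k) a⁻¹ (n := 3) (by norm_num)
  have hD0ne : D0 ≠ 0 := by
    intro h
    rw [h, zero_pow (by norm_num)] at hD0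
    exact hA (inv_eq_zero.mp hD0.symm)
  obtain ⟨D3, hD3⟩ := IsAlgClosed.exists_pow_nat_eq (k := k) (b * D0)⁻¹ (n := 2) (by norm_num)
  have hD3ne : D3 ≠ 0 := by
    intro h
    rw [h, zero_pow (by norm_num)] at hD3
    rcases mul_eq_zero.mp (inv_eq_zero.mp hD3.symm) with h' | h'
    exacts [hB h', hD0ne h']
  obtain ⟨D1, hD1⟩ := IsAlgClosed.exists_pow_nat_eq (k := k) (d * D3)⁻¹ (n := 2) (by norm_num)
  have hD1ne : D1 ≠ 0 := by
    intro h
    rw [h, zero_pow (by norm_num)] at hD1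
    rcases mul_eq_zero.mp (inv_eq_zero.mp hD1.symm) with h' | h'
    exacts [hD h', hD3ne h']
  obtain ⟨D2, hD2⟩ := IsAlgClosed.exists_pow_nat_eq (k := k) (-(c * D1)⁻¹) (n := 2) (by norm_num)
  have hD2ne : D2 ≠ 0 := by
    intro h
    rw [h, zero_pow (by norm_num)] at hD2
    have : (c * D1)⁻¹ = 0 := by
      have := hD2.symm
      rwa [neg_eq_zero] at this
    rcases mul_eq_zero.mp (inv_eq_zero.mp this) with h' | h'
    exacts [hC h', hD1ne h']
  refine ⟨![D0, D1, D2, D3], 1, fun i => ?_, ?_⟩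
  · fin_cases i
    · simpa using hD0ne
    · simpa using hD1ne
    · simpa using hD2ne
    · simpa using hD3ne
  · rw [substMatrix_diagonal, Feq]
    simp only [_root_.map_add, _root_.map_mul, _root_.map_pow, aeval_C, aeval_X,
      algebraMap_eq, Units.val_one, one_smul,
      Matrix.cons_val_zero, Matrix.cons_val_one, Matrix.head_cons,
      Matrix.cons_val_two, Matrix.tail_cons, Matrix.cons_val_three]
    have E0 : (C a : MvPolynomial (Fin 4) k) * C D0 ^ 3 = 1 := by
      rw [← C_pow, ← C_mul, hD0, mul_inv_cancel₀ hA, C_1]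
    have E1 : (C b : MvPolynomial (Fin 4) k) * (C D0 * C D3 ^ 2) = 1 := by
      rw [← C_pow, ← C_mul, ← C_mul, hD3,
        show b * (D0 * (b * D0)⁻¹) = 1 by field_simp, C_1]
    have E2 : (C c : MvPolynomial (Fin 4) k) * (C D1 * C D2 ^ 2) = -1 := by
      rw [← C_pow, ← C_mul, ← C_mul, hD2,
        show c * (D1 * -(c * D1)⁻¹) = -1 by field_simp]
      simp
    have E3 : (C d : MvPolynomial (Fin 4) k) * (C D1 ^ 2 * C D3) = 1 := by
      rw [← C_pow, ← C_mul, ← C_mul, hD1,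
        show d * ((d * D3)⁻¹ * D3) = 1 by field_simp, C_1]
    linear_combination (X 0 : MvPolynomial (Fin 4) k) ^ 3 * E0 + (X 0 * X 3 ^ 2) * E1
      + (X 1 * X 2 ^ 2) * E2 + (X 1 ^ 2 * X 3) * E3
end
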